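/- arXiv:1403.1111 — 7 statements merged into one kernel-verified Lean document; each statement's English description precedes it below -/
import Mathlib

section
/- Let f : ℝ^I → ℝ^I be globally Lipschitz continuous. Then the following are equivalent: (i) for every T > 0 and every differentiable function y : [0,T] → ℝ^I satisfying y'(t) = f(y(t)) for all t ∈ [0,T] and y(0) ≥ 0 componentwise, one has y(t) ≥ 0 componentwise for all t ∈ [0,T]; (ii) for every vector v ∈ ℝ^I with v ≥ 0 componentwise and every index i with v_i = 0, one has f_i(v) ≥ 0. -/
open Set Filter Real
open scoped Topology

/-- Hard direction: the boundary condition implies positivity of solutions, via Grönwall applied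
to the (sup-)norm of the negative part of the solution. -/
lemma stmt0_aux {I : ℕ} (f : (Fin I → ℝ) → (Fin I → ℝ)) (L : NNReal)
    (hf : LipschitzWith L f)
    (hpos : ∀ v : Fin I → ℝ, (∀ i, 0 ≤ v i) → ∀ i, v i = 0 → 0 ≤ f v i)
    (T : ℝ) (hT : 0 < T) (y : ℝ → Fin I → ℝ)
    (hy : ∀ t ∈ Set.Icc (0 : ℝ) T, HasDerivWithinAt y (f (y t)) (Set.Icc (0 : ℝ) T) t)
    (hy0 : ∀ i, 0 ≤ y 0 i) :
    ∀ t ∈ Set.Icc (0 : ℝ) T, ∀ i, 0 ≤ y t i := by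
  set g : ℝ → Fin I → ℝ := fun t i => max (-(y t i)) 0 with hg
  set φ : ℝ → ℝ := fun t => ‖g t‖ with hφ
  have hφnn : ∀ t, 0 ≤ φ t := fun t => norm_nonneg _
  have ycont : ContinuousOn y (Icc (0:ℝ) T) := fun s hs => (hy s hs).continuousWithinAt
  have gcont : ContinuousOn g (Icc (0:ℝ) T) := by
    have houter : Continuous fun w : Fin I → ℝ => (fun i => max (-(w i)) 0) :=
      continuous_pi fun i => ((continuous_apply i).neg).max continuous_const
    exact houter.comp_continuousOn ycont
  have φcont : ContinuousOn φ (Icc (0:ℝ) T) := gcont.norm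
  -- key filter comparison at points of `Ico 0 T`
  have hsub : ∀ s ∈ Ico (0:ℝ) T, 𝓝[>] s ≤ 𝓝[Icc (0:ℝ) T \ {s}] s := by
    intro s hs
    rw [← nhdsWithin_Ioc_eq_nhdsGT hs.2]
    exact nhdsWithin_mono _ (fun z hz => ⟨⟨hs.1.trans hz.1.le, hz.2⟩, ne_of_gt hz.1⟩)
  have hsub' : ∀ s ∈ Ico (0:ℝ) T, 𝓝[>] s ≤ 𝓝[Icc (0:ℝ) T] s := fun s hs =>
    (hsub s hs).trans (nhdsWithin_mono _ diff_subset)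
  -- the Dini-derivative hypothesis of Grönwall
  have key : ∀ s ∈ Ico (0:ℝ) T, ∀ r, (L : ℝ) * φ s < r →
      ∀ᶠ z in 𝓝[>] s, (z - s)⁻¹ * (φ z - φ s) ≤ r := by
    intro s hs r hr
    have hr0 : (0:ℝ) ≤ r := le_of_lt (lt_of_le_of_lt (by positivity) hr)
    -- componentwise eventual bound
    have hcomp : ∀ i, ∀ᶠ z in 𝓝[>] s, g z i ≤ φ s + r * (z - s) := by
      intro i
      rcases le_or_gt (y s i) 0 with hyi | hyi
      · -- the derivative of this component is bounded below by `-(L * φ s)`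
        set v : Fin I → ℝ := fun j => max (y s j) 0 with hv
        have hvnn : ∀ j, 0 ≤ v j := fun j => le_max_right _ _
        have hvi : v i = 0 := max_eq_right hyi
        have hfv : 0 ≤ f v i := hpos v hvnn i hvi
        have hdiff : y s - v = -(g s) := by
          funext j
          simp only [Pi.sub_apply, Pi.neg_apply, hg, hv]
          rcases le_total (y s j) 0 with h | h
          · rw [max_eq_right h, max_eq_left (by linarith)]; ring
          · rw [max_eq_left h, max_eq_right (by linarith)]; ring
        have hdist : ‖y s - v‖ = φ s := by rw [hdiff, norm_neg]
        have hLip : |f (y s) i - f v i| ≤ (L : ℝ) * φ s := by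
          have h1 : ‖f (y s) - f v‖ ≤ (L : ℝ) * φ s := by
            have := hf.dist_le_mul (y s) v
            rwa [dist_eq_norm, dist_eq_norm, hdist] at this
          calc |f (y s) i - f v i| = ‖(f (y s) - f v) i‖ := by simp [Real.norm_eq_abs]
            _ ≤ ‖f (y s) - f v‖ := norm_le_pi_norm _ i
            _ ≤ (L : ℝ) * φ s := h1
        have hder : -r < f (y s) i := by
          have : -((L:ℝ) * φ s) ≤ f (y s) i := by
            have := (abs_le.mp hLip).1
            linarith
          linarith
        -- slope bound from the derivative
        have hslope : Tendsto (slope (fun z => y z i) s) (𝓝[>] s) (𝓝 (f (y s) i)) := by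
          have hD : HasDerivWithinAt (fun z => y z i) (f (y s) i) (Icc (0:ℝ) T) s :=
            hasDerivWithinAt_pi.mp (hy s (Ico_subset_Icc_self hs)) i
          exact (hasDerivWithinAt_iff_tendsto_slope.mp hD).mono_left (hsub s hs)
        have hev := hslope.eventually (eventually_gt_nhds hder)
        filter_upwards [hev, self_mem_nhdsWithin] with z hz (hzs : s < z)
        have hzs' : 0 < z - s := by linarith
        have hslope_eq : slope (fun z => y z i) s z = (z - s)⁻¹ * (y z i - y s i) := by
          simp [slope_def_field, div_eq_inv_mul]
        rw [hslope_eq] at hz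
        have h2 : (z - s) * (-r) < y z i - y s i := by
          have h := mul_lt_mul_of_pos_left hz hzs'
          rwa [← mul_assoc, mul_inv_cancel₀ (ne_of_gt hzs'), one_mul] at h
        have hgsi : g s i ≤ φ s := by
          calc g s i ≤ |g s i| := le_abs_self _
            _ = ‖g s i‖ := (Real.norm_eq_abs _).symm
            _ ≤ ‖g s‖ := norm_le_pi_norm _ i
        have hgsi' : g s i = -(y s i) := max_eq_left (by linarith)
        have h3 : -(y z i) ≤ φ s + r * (z - s) := by nlinarith
        have h4 : (0:ℝ) ≤ φ s + r * (z - s) := by positivity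
        exact max_le h3 h4
      · -- the component stays positive, so its negative part is 0
        have hc : ContinuousWithinAt (fun z => y z i) (Icc (0:ℝ) T) s :=
          (continuous_apply i).continuousAt.comp_continuousWithinAt
            (ycont s (Ico_subset_Icc_self hs))
        have hev := (hc.mono_left (hsub' s hs)).eventually (eventually_gt_nhds hyi)
        filter_upwards [hev, self_mem_nhdsWithin] with z hz (hzs : s < z)
        have : g z i = 0 := max_eq_right (by linarith)
        rw [this]
        have : (0:ℝ) ≤ r * (z - s) := by nlinarith
        linarith [hφnn s]
    have hall : ∀ᶠ z in 𝓝[>] s, ∀ i, g z i ≤ φ s + r * (z - s) := eventually_all.mpr hcomp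
    filter_upwards [hall, self_mem_nhdsWithin] with z hz (hzs : s < z)
    have hzs' : 0 < z - s := by linarith
    have hRHS : (0:ℝ) ≤ φ s + r * (z - s) := by positivity
    have hφz : φ z ≤ φ s + r * (z - s) := by
      rw [hφ]
      refine (pi_norm_le_iff_of_nonneg hRHS).mpr fun i => ?_
      rw [Real.norm_eq_abs, abs_of_nonneg (le_max_right _ _)]
      exact hz i
    calc (z - s)⁻¹ * (φ z - φ s) ≤ (z - s)⁻¹ * (r * (z - s)) := by
          apply mul_le_mul_of_nonneg_left (by linarith) (by positivity)
      _ = r := by field_simp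
  have key' : ∀ s ∈ Ico (0:ℝ) T, ∀ r, (L : ℝ) * φ s < r →
      ∃ᶠ z in 𝓝[>] s, (z - s)⁻¹ * (φ z - φ s) < r := by
    intro s hs r hr
    have hmid : (L : ℝ) * φ s < ((L : ℝ) * φ s + r) / 2 := by linarith
    have hmid2 : ((L : ℝ) * φ s + r) / 2 < r := by linarith
    exact ((key s hs _ hmid).mono fun z hz => lt_of_le_of_lt hz hmid2).frequently
  have hφ0 : φ 0 ≤ 0 := by
    have : g 0 = 0 := by
      funext i; exact max_eq_right (by linarith [hy0 i])
    simp [hφ, this]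
  have hgron := le_gronwallBound_of_liminf_deriv_right_le (f := φ)
    (f' := fun s => (L : ℝ) * φ s) (δ := 0) (K := (L : ℝ)) (ε := 0)
    φcont key' hφ0 (fun s _ => by simp)
  intro t ht i
  have hφt : φ t ≤ 0 := by
    have := hgron t ht
    rwa [sub_zero, gronwallBound_ε0_δ0] at this
  have hgti : |g t i| ≤ 0 := by
    calc |g t i| = ‖g t i‖ := (Real.norm_eq_abs _).symm
      _ ≤ ‖g t‖ := norm_le_pi_norm _ i
      _ ≤ 0 := hφt
  have : g t i = 0 := abs_eq_zero.mp (le_antisymm hgti (abs_nonneg _))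
  have : -(y t i) ≤ 0 := by
    by_contra h
    push_neg at h
    rw [hg] at this
    simp only [max_eq_left h.le] at this
    linarith
  linarith

/-- Positivity criterion for semi-discrete ODE systems (Theorem 3.1, Hundsdorfer–Verwer):
for a globally Lipschitz right-hand side `f`, nonnegativity of solutions is equivalent to
the condition `v ≥ 0, v i = 0 → f v i ≥ 0`. -/
theorem stmt0 {I : ℕ} (f : (Fin I → ℝ) → (Fin I → ℝ)) (L : NNReal)
    (hf : LipschitzWith L f) :
    (∀ T : ℝ, 0 < T → ∀ y : ℝ → Fin I → ℝ,
        (∀ t ∈ Set.Icc (0 : ℝ) T, HasDerivWithinAt y (f (y t)) (Set.Icc (0 : ℝ) T) t) →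
        (∀ i, 0 ≤ y 0 i) →
        ∀ t ∈ Set.Icc (0 : ℝ) T, ∀ i, 0 ≤ y t i) ↔
      (∀ v : Fin I → ℝ, (∀ i, 0 ≤ v i) → ∀ i, v i = 0 → 0 ≤ f v i) := by
  constructor
  · -- (i) → (ii): construct a local solution via Picard–Lindelöf
    intro h v hv i hvi
    set C : ℝ := ‖f v‖ + L with hC
    have hC0 : 0 ≤ C := by positivity
    set T : ℝ := 1 / (C + 1) with hT
    have hT0 : 0 < T := by positivity
    have hpl : IsPicardLindelof (fun _ : ℝ => f) (tmin := 0) (tmax := T)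
        ⟨0, le_refl 0, hT0.le⟩ v 1 0 ⟨C, hC0⟩ L := by
      refine ⟨fun t _ => hf.lipschitzOnWith,
        fun x _ => continuousOn_const, fun t _ x hx => ?_, ?_⟩
      · show ‖f x‖ ≤ C
        have h1 : ‖f x - f v‖ ≤ (L : ℝ) * 1 := by
          have := hf.dist_le_mul x v
          rw [dist_eq_norm, dist_eq_norm] at this
          exact this.trans (mul_le_mul_of_nonneg_left (by simpa [dist_eq_norm] using Metric.mem_closedBall.mp hx) L.2)
        calc ‖f x‖ = ‖f v + (f x - f v)‖ := by ring_nf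
          _ ≤ ‖f v‖ + ‖f x - f v‖ := norm_add_le _ _
          _ ≤ ‖f v‖ + (L : ℝ) * 1 := by linarith
          _ = C := by rw [hC]; ring
      · show C * max (T - 0) (0 - 0) ≤ ((1 : NNReal) : ℝ) - ((0 : NNReal) : ℝ)
        rw [NNReal.coe_one, NNReal.coe_zero, show (1:ℝ) - 0 = 1 from sub_zero 1]
        have : max (T - 0) (0 - 0) = T := by
          rw [sub_zero, sub_zero]; exact max_eq_left hT0.le
        rw [this, hT]
        rw [mul_one_div, div_le_one (by positivity)]
        linarith
    obtain ⟨y, hy0, hy⟩ := hpl.exists_eq_forall_mem_Icc_hasDerivWithinAt₀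
    have hy0 : y 0 = v := hy0
    have hy0' : ∀ j, 0 ≤ y 0 j := fun j => hy0 ▸ hv j
    have hpos := h T hT0 y hy hy0'
    -- the derivative of the `i`-th component at `0` must be nonnegative
    have hD : HasDerivWithinAt (fun z => y z i) (f (y 0) i) (Icc (0:ℝ) T) 0 :=
      hasDerivWithinAt_pi.mp (hy 0 ⟨le_refl 0, hT0.le⟩) i
    rw [hy0] at hD
    have hsub : 𝓝[>] (0:ℝ) ≤ 𝓝[Icc (0:ℝ) T \ {0}] 0 := by
      rw [← nhdsWithin_Ioc_eq_nhdsGT hT0]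
      exact nhdsWithin_mono _ (fun z hz => ⟨⟨hz.1.le, hz.2⟩, ne_of_gt hz.1⟩)
    have hslope : Tendsto (slope (fun z => y z i) 0) (𝓝[>] (0:ℝ)) (𝓝 (f v i)) :=
      (hasDerivWithinAt_iff_tendsto_slope.mp hD).mono_left hsub
    refine ge_of_tendsto hslope ?_
    have hIoc : Ioc (0:ℝ) T ∈ 𝓝[>] (0:ℝ) := by
      rw [← nhdsWithin_Ioc_eq_nhdsGT hT0]; exact self_mem_nhdsWithin
    filter_upwards [hIoc] with z hz
    have hyz : 0 ≤ y z i := hpos z ⟨hz.1.le, hz.2⟩ i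
    have hy00 : y 0 i = 0 := by rw [hy0]; exact hvi
    rw [slope_def_field, hy00]
    exact div_nonneg (by linarith) (by linarith [hz.1])
  · intro hpos T hT y hy hy0
    exact stmt0_aux f L hf hpos T hT y hy hy0
end

section
/- Let a mesh of ]0, x_max] be given and suppose it is quasi-uniform with constant C ≥ 1, i.e., (max_i Δx_i)/(min_i Δx_i) ≤ C. Fix indices i, k and p ≥ 2 with i + p ≤ I, and suppose the p points x_{i+j−1/2} − x_k for j = 1, …, p all lie in the same cell Λ_α for some index α. Then p ≤ C + 1. -/
/-- Lemma 3.2: on a quasi-uniform mesh (max width / min width ≤ C), if the `p ≥ 2` points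
`x_{i+j-1/2} − x_k`, `j = 1, …, p`, all lie in one cell `Λ_α`, then `p ≤ C + 1`.
Here `xh m` is the cell boundary `x_{m+1/2}`, cell `Λ_m = ]xh (m-1), xh m]`, the width is
`Δx_m = xh m − xh (m−1)` and the center is `x_m = (xh (m−1) + xh m)/2`. -/
theorem stmt2 (I : ℕ) (xmax C : ℝ) (hC : 1 ≤ C) (xh : ℕ → ℝ)
    (hI : 1 ≤ I) (h0 : xh 0 = 0) (hImax : xh I = xmax)
    (hmono : ∀ m, m < I → xh m < xh (m + 1))
    (hqu : ∀ m ∈ Finset.Icc 1 I, ∀ l ∈ Finset.Icc 1 I,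
      xh m - xh (m - 1) ≤ C * (xh l - xh (l - 1)))
    (i k p : ℕ) (hk : 1 ≤ k) (hki : k ≤ i) (hp : 2 ≤ p) (hpi : i + p ≤ I)
    (α : ℕ) (hα : 1 ≤ α) (hαI : α ≤ I)
    (hsame : ∀ j ∈ Finset.Icc 1 p,
      xh (i + j - 1) - (xh (k - 1) + xh k) / 2 ∈ Set.Ioc (xh (α - 1)) (xh α)) :
    (p : ℝ) ≤ C + 1 := by
  have hC0 : (0:ℝ) < C := lt_of_lt_of_le one_pos hC
  set a := xh (α - 1)
  set b := xh α
  set c := (xh (k - 1) + xh k) / 2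
  have hαmem : α ∈ Finset.Icc 1 I := Finset.mem_Icc.mpr ⟨hα, hαI⟩
  have h1 : xh (i + 1 - 1) - c ∈ Set.Ioc a b :=
    hsame 1 (Finset.mem_Icc.mpr ⟨le_refl 1, le_trans (by norm_num) hp⟩)
  have hP : xh (i + p - 1) - c ∈ Set.Ioc a b :=
    hsame p (Finset.mem_Icc.mpr ⟨le_trans (by norm_num) hp, le_refl p⟩)
  have hab : a < b := lt_of_lt_of_le h1.1 h1.2
  -- lower bound on increments
  have key : ∀ n, n ≤ p - 1 → (n : ℝ) * ((b - a) / C) ≤ xh (i + n) - xh i := by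
    intro n hn
    induction n with
    | zero => simp
    | succ n ih =>
      have hn' : n ≤ p - 1 := le_trans (Nat.le_succ n) hn
      have hIH := ih hn'
      have hmem : i + n + 1 ∈ Finset.Icc 1 I := by
        refine Finset.mem_Icc.mpr ⟨by omega, by omega⟩
      have hq := hqu α hαmem (i + n + 1) hmem
      have hsub : i + n + 1 - 1 = i + n := by omega
      rw [hsub] at hq
      have hstep : (b - a) / C ≤ xh (i + n + 1) - xh (i + n) := by
        rw [div_le_iff₀ hC0]
        linarith [hq]
      push_cast
      have : i + (n + 1) = i + n + 1 := by omega
      rw [this]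
      linarith
  have hkey := key (p - 1) (le_refl _)
  have hcast : ((p - 1 : ℕ) : ℝ) = (p : ℝ) - 1 := by
    have : 1 ≤ p := by omega
    push_cast [this]; ring
  rw [hcast] at hkey
  have hip : i + (p - 1) = i + p - 1 := by omega
  rw [hip] at hkey
  -- upper bound from both endpoints in one cell
  have hup : xh (i + p - 1) - xh i ≤ b - a := by
    have h1' : a < xh (i + 1 - 1) - c := h1.1
    have hP' : xh (i + p - 1) - c ≤ b := hP.2
    have : i + 1 - 1 = i := by omega
    rw [this] at h1'
    linarith
  have hfin : ((p : ℝ) - 1) * ((b - a) / C) ≤ b - a := le_trans hkey hup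
  have hba : (0:ℝ) < b - a := sub_pos.mpr hab
  have hmul : ((p : ℝ) - 1) * (b - a) ≤ C * (b - a) := by
    have := mul_le_mul_of_nonneg_right hfin (le_of_lt hC0)
    calc ((p:ℝ)-1)*(b-a) = ((p:ℝ)-1)*((b-a)/C)*C := by field_simp
      _ ≤ (b-a)*C := this
      _ = C*(b-a) := by ring
  have : (p : ℝ) - 1 ≤ C := le_of_mul_le_mul_right (by linarith [hmul]) hba
  linarith
end

section
/- Let a mesh of ]0, x_max] be given and let b, S satisfy 0 ≤ b(x_i, x_k) S(x_k) ≤ Q₁ for all cell centers x_i, x_k. Define for n ∈ ℝ^I and 1 ≤ i ≤ I: Δx_i ΔJ^{brk}_i(n) = − Σ_{k=i+1}^{I} S(x_k) n_k Δx_k b(x_i, x_k) Δx_i + S(x_i) n_i Δx_i Σ_{j=1}^{i−1} (x_j/x_i) b(x_j, x_i) Δx_j. Then for all n, m ∈ ℝ^I one has Σ_{i=1}^I Δx_i |ΔJ^{brk}_i(n) − ΔJ^{brk}_i(m)| ≤ 2 Q₁ x_max Σ_{i=1}^I Δx_i |n_i − m_i|, i.e., ΔJ^{brk} is Lipschitz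 in the discrete L¹ norm with constant 2 Q₁ x_max. -/
/-- Width `Δx_i = x_{i+1/2} − x_{i−1/2}` of cell `i`, where `xh m` encodes the boundary
point `x_{m+1/2}`. -/
noncomputable def meshW (xh : ℕ → ℝ) (i : ℕ) : ℝ := xh i - xh (i - 1)

/-- Center `x_i = (x_{i−1/2} + x_{i+1/2})/2` of cell `i`. -/
noncomputable def meshC (xh : ℕ → ℝ) (i : ℕ) : ℝ := (xh (i - 1) + xh i) / 2

/-- Breakage part of Lemma 3.5: the flux difference term `ΔJ^{brk}`, defined by
`Δx_i ΔJ^{brk}_i(n) = − Σ_{k=i+1}^{I} S(x_k) n_k Δx_k b(x_i,x_k) Δx_i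
 + S(x_i) n_i Δx_i Σ_{j=1}^{i−1} (x_j/x_i) b(x_j,x_i) Δx_j`,
is Lipschitz in the discrete L¹ norm with constant `2 Q₁ x_max`. -/
theorem stmt5 (I : ℕ) (xmax Q1 : ℝ) (hI : 1 ≤ I) (xh : ℕ → ℝ)
    (h0 : xh 0 = 0) (hImax : xh I = xmax)
    (hmono : ∀ m, m < I → xh m < xh (m + 1))
    (b : ℝ → ℝ → ℝ) (S : ℝ → ℝ)
    (hbS : ∀ i ∈ Finset.Icc 1 I, ∀ k ∈ Finset.Icc 1 I,
      0 ≤ b (meshC xh i) (meshC xh k) * S (meshC xh k) ∧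
        b (meshC xh i) (meshC xh k) * S (meshC xh k) ≤ Q1)
    (DJbrk : (ℕ → ℝ) → ℕ → ℝ)
    (hDJ : ∀ n : ℕ → ℝ, ∀ i ∈ Finset.Icc 1 I,
      meshW xh i * DJbrk n i =
        -(∑ k ∈ Finset.Icc (i + 1) I,
            S (meshC xh k) * n k * meshW xh k * b (meshC xh i) (meshC xh k) * meshW xh i) +
          S (meshC xh i) * n i * meshW xh i *
            ∑ j ∈ Finset.Icc 1 (i - 1),
              meshC xh j / meshC xh i * b (meshC xh j) (meshC xh i) * meshW xh j) :
    ∀ n m : ℕ → ℝ,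
      (∑ i ∈ Finset.Icc 1 I, meshW xh i * |DJbrk n i - DJbrk m i|) ≤
        2 * Q1 * xmax * ∑ i ∈ Finset.Icc 1 I, meshW xh i * |n i - m i| := by
  intro n m
  -- abbreviations
  have hmono' : ∀ a c : ℕ, a ≤ c → c ≤ I → xh a ≤ xh c := by
    intro a c hac hcI
    induction hac with
    | refl => exact le_rfl
    | @step c' h ih =>
      have h1 : xh a ≤ xh c' := ih (by omega)
      have h2 : xh c' < xh (c' + 1) := hmono c' (by omega)
      linarith
  have hxh0 : ∀ k, k ≤ I → 0 ≤ xh k := by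
    intro k hk
    have := hmono' 0 k (Nat.zero_le _) hk
    linarith [h0 ▸ this]
  have wpos : ∀ i, 1 ≤ i → i ≤ I → 0 < meshW xh i := by
    intro i h1 h2
    have h3 : xh (i - 1) < xh (i - 1 + 1) := hmono (i - 1) (by omega)
    have h4 : i - 1 + 1 = i := by omega
    rw [h4] at h3
    simp only [meshW]
    linarith
  have cpos : ∀ i, 1 ≤ i → i ≤ I → 0 < meshC xh i := by
    intro i h1 h2
    have h3 : 0 ≤ xh (i - 1) := hxh0 _ (by omega)
    have h4 : xh 0 < xh 1 := hmono 0 (by omega)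
    have h5 : xh 1 ≤ xh i := hmono' 1 i h1 h2
    simp only [meshC]
    rw [h0] at h4
    linarith
  have cmono : ∀ j i, 1 ≤ j → j ≤ i → i ≤ I → meshC xh j ≤ meshC xh i := by
    intro j i h1 h2 h3
    have ha : xh (j - 1) ≤ xh (i - 1) := hmono' _ _ (by omega) (by omega)
    have hb : xh j ≤ xh i := hmono' _ _ h2 h3
    simp only [meshC]; linarith
  have hQ1 : 0 ≤ Q1 := by
    have := hbS 1 (Finset.mem_Icc.mpr ⟨le_rfl, hI⟩) 1 (Finset.mem_Icc.mpr ⟨le_rfl, hI⟩)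
    linarith [this.1, this.2]
  have tele : ∀ N : ℕ, (∑ i ∈ Finset.Icc 1 N, meshW xh i) = xh N - xh 0 := by
    intro N
    induction N with
    | zero => simp
    | succ N ih =>
      rw [Finset.sum_Icc_succ_top (by omega), ih]
      have : N + 1 - 1 = N := by omega
      simp only [meshW, this]
      ring
  have hsumw : (∑ i ∈ Finset.Icc 1 I, meshW xh i) = xmax := by
    rw [tele, h0, hImax]; ring
  set T := ∑ i ∈ Finset.Icc 1 I, meshW xh i * |n i - m i| with hT
  have hTnonneg : 0 ≤ T := by
    apply Finset.sum_nonneg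
    intro k hk
    obtain ⟨h1, h2⟩ := Finset.mem_Icc.mp hk
    exact mul_nonneg (wpos k h1 h2).le (abs_nonneg _)
  have hkey : ∀ i ∈ Finset.Icc 1 I,
      meshW xh i * |DJbrk n i - DJbrk m i| ≤
        Q1 * T * meshW xh i + Q1 * xmax * (meshW xh i * |n i - m i|) := by
    intro i hi
    obtain ⟨hi1, hiI⟩ := Finset.mem_Icc.mp hi
    have hwi : 0 < meshW xh i := wpos i hi1 hiI
    have hdiff : meshW xh i * (DJbrk n i - DJbrk m i) =
        -(∑ k ∈ Finset.Icc (i + 1) I,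
            S (meshC xh k) * (n k - m k) * meshW xh k * b (meshC xh i) (meshC xh k) * meshW xh i)
        + (n i - m i) * meshW xh i *
            ∑ j ∈ Finset.Icc 1 (i - 1),
              meshC xh j / meshC xh i * (b (meshC xh j) (meshC xh i) * S (meshC xh i)) * meshW xh j := by
      have h1 := hDJ n i hi
      have h2 := hDJ m i hi
      have e1 : (∑ k ∈ Finset.Icc (i + 1) I,
            S (meshC xh k) * (n k - m k) * meshW xh k * b (meshC xh i) (meshC xh k) * meshW xh i)
          = (∑ k ∈ Finset.Icc (i + 1) I,
            S (meshC xh k) * n k * meshW xh k * b (meshC xh i) (meshC xh k) * meshW xh i)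
          - (∑ k ∈ Finset.Icc (i + 1) I,
            S (meshC xh k) * m k * meshW xh k * b (meshC xh i) (meshC xh k) * meshW xh i) := by
        rw [← Finset.sum_sub_distrib]
        exact Finset.sum_congr rfl (fun k _ => by ring)
      have e2 : (∑ j ∈ Finset.Icc 1 (i - 1),
            meshC xh j / meshC xh i * (b (meshC xh j) (meshC xh i) * S (meshC xh i)) * meshW xh j)
          = S (meshC xh i) * ∑ j ∈ Finset.Icc 1 (i - 1),
              meshC xh j / meshC xh i * b (meshC xh j) (meshC xh i) * meshW xh j := by
        rw [Finset.mul_sum]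
        exact Finset.sum_congr rfl (fun j _ => by ring)
      have e3 : meshW xh i * (DJbrk n i - DJbrk m i)
          = meshW xh i * DJbrk n i - meshW xh i * DJbrk m i := by ring
      rw [e3, h1, h2, e1, e2]
      ring
    have habs : meshW xh i * |DJbrk n i - DJbrk m i|
        = |meshW xh i * (DJbrk n i - DJbrk m i)| := by
      rw [abs_mul, abs_of_pos hwi]
    rw [habs, hdiff]
    have hA : |∑ k ∈ Finset.Icc (i + 1) I,
        S (meshC xh k) * (n k - m k) * meshW xh k * b (meshC xh i) (meshC xh k) * meshW xh i|
        ≤ Q1 * T * meshW xh i := by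
      calc |∑ k ∈ Finset.Icc (i + 1) I,
            S (meshC xh k) * (n k - m k) * meshW xh k * b (meshC xh i) (meshC xh k) * meshW xh i|
          ≤ ∑ k ∈ Finset.Icc (i + 1) I,
            |S (meshC xh k) * (n k - m k) * meshW xh k * b (meshC xh i) (meshC xh k) * meshW xh i| :=
            Finset.abs_sum_le_sum_abs _ _
        _ ≤ ∑ k ∈ Finset.Icc (i + 1) I,
            Q1 * (meshW xh k * |n k - m k|) * meshW xh i := by
            apply Finset.sum_le_sum
            intro k hk
            obtain ⟨hk1, hk2⟩ := Finset.mem_Icc.mp hk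
            have hkmem : k ∈ Finset.Icc 1 I := Finset.mem_Icc.mpr ⟨by omega, hk2⟩
            obtain ⟨hbs0, hbs1⟩ := hbS i hi k hkmem
            have hwk : 0 < meshW xh k := wpos k (by omega) hk2
            have hre : S (meshC xh k) * (n k - m k) * meshW xh k *
                b (meshC xh i) (meshC xh k) * meshW xh i
                = (b (meshC xh i) (meshC xh k) * S (meshC xh k)) *
                  ((n k - m k) * (meshW xh k * meshW xh i)) := by ring
            rw [hre, abs_mul, abs_of_nonneg hbs0, abs_mul, abs_mul,
              abs_of_pos hwk, abs_of_pos hwi]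
            have hd0 : 0 ≤ |n k - m k| := abs_nonneg _
            nlinarith [mul_nonneg (mul_nonneg (sub_nonneg.mpr hbs1) hd0)
              (mul_nonneg hwk.le hwi.le)]
        _ ≤ ∑ k ∈ Finset.Icc 1 I, Q1 * (meshW xh k * |n k - m k|) * meshW xh i := by
            apply Finset.sum_le_sum_of_subset_of_nonneg
            · exact Finset.Icc_subset_Icc (by omega) le_rfl
            · intro k hk _
              obtain ⟨hk1, hk2⟩ := Finset.mem_Icc.mp hk
              exact mul_nonneg (mul_nonneg hQ1
                (mul_nonneg (wpos k hk1 hk2).le (abs_nonneg _))) hwi.le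
        _ = Q1 * T * meshW xh i := by
            rw [hT, Finset.mul_sum, Finset.sum_mul]
    set ss2 := ∑ j ∈ Finset.Icc 1 (i - 1),
        meshC xh j / meshC xh i * (b (meshC xh j) (meshC xh i) * S (meshC xh i)) * meshW xh j
      with hss2
    have hterm : ∀ j ∈ Finset.Icc 1 (i - 1),
        0 ≤ meshC xh j / meshC xh i * (b (meshC xh j) (meshC xh i) * S (meshC xh i)) * meshW xh j
        ∧ meshC xh j / meshC xh i * (b (meshC xh j) (meshC xh i) * S (meshC xh i)) * meshW xh j
          ≤ Q1 * meshW xh j := by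
      intro j hj
      obtain ⟨hj1, hj2⟩ := Finset.mem_Icc.mp hj
      have hjI : j ≤ I := by omega
      have hjmem : j ∈ Finset.Icc 1 I := Finset.mem_Icc.mpr ⟨hj1, hjI⟩
      obtain ⟨hbs0, hbs1⟩ := hbS j hjmem i hi
      have hwj : 0 < meshW xh j := wpos j hj1 hjI
      have hci : 0 < meshC xh i := cpos i hi1 hiI
      have hcj : 0 < meshC xh j := cpos j hj1 hjI
      have hcle : meshC xh j ≤ meshC xh i := cmono j i hj1 (by omega) hiI
      have hr0 : 0 ≤ meshC xh j / meshC xh i := div_nonneg hcj.le hci.le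
      have hr1 : meshC xh j / meshC xh i ≤ 1 := div_le_one_of_le₀ hcle hci.le
      constructor
      · exact mul_nonneg (mul_nonneg hr0 hbs0) hwj.le
      · nlinarith [mul_nonneg hr0 hbs0, mul_nonneg (sub_nonneg.mpr hbs1) hwj.le,
          mul_nonneg (mul_nonneg (sub_nonneg.mpr hr1) hbs0) hwj.le]
    have hss2nonneg : 0 ≤ ss2 :=
      Finset.sum_nonneg (fun j hj => (hterm j hj).1)
    have hss2le : ss2 ≤ Q1 * xmax := by
      calc ss2 ≤ ∑ j ∈ Finset.Icc 1 (i - 1), Q1 * meshW xh j :=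
            Finset.sum_le_sum (fun j hj => (hterm j hj).2)
        _ = Q1 * (xh (i - 1) - xh 0) := by rw [← Finset.mul_sum, tele]
        _ ≤ Q1 * xmax := by
            have h1 : xh (i - 1) ≤ xh I := hmono' (i - 1) I (by omega) le_rfl
            rw [h0, hImax] at *
            nlinarith
    have hB : |(n i - m i) * meshW xh i * ss2| ≤ Q1 * xmax * (meshW xh i * |n i - m i|) := by
      rw [abs_mul, abs_mul, abs_of_pos hwi, abs_of_nonneg hss2nonneg]
      nlinarith [abs_nonneg (n i - m i), mul_nonneg (abs_nonneg (n i - m i)) hwi.le,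
        mul_nonneg (mul_nonneg (abs_nonneg (n i - m i)) hwi.le) (sub_nonneg.mpr hss2le)]
    calc |-(∑ k ∈ Finset.Icc (i + 1) I,
          S (meshC xh k) * (n k - m k) * meshW xh k * b (meshC xh i) (meshC xh k) * meshW xh i)
          + (n i - m i) * meshW xh i * ss2|
        ≤ |-(∑ k ∈ Finset.Icc (i + 1) I,
            S (meshC xh k) * (n k - m k) * meshW xh k * b (meshC xh i) (meshC xh k) * meshW xh i)|
          + |(n i - m i) * meshW xh i * ss2| := abs_add_le _ _
      _ ≤ Q1 * T * meshW xh i + Q1 * xmax * (meshW xh i * |n i - m i|) := by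
          rw [abs_neg]
          exact add_le_add hA hB
  calc (∑ i ∈ Finset.Icc 1 I, meshW xh i * |DJbrk n i - DJbrk m i|)
      ≤ ∑ i ∈ Finset.Icc 1 I,
          (Q1 * T * meshW xh i + Q1 * xmax * (meshW xh i * |n i - m i|)) :=
        Finset.sum_le_sum hkey
    _ = Q1 * T * (∑ i ∈ Finset.Icc 1 I, meshW xh i) + Q1 * xmax * T := by
        rw [Finset.sum_add_distrib, ← Finset.mul_sum, ← Finset.mul_sum]
    _ = 2 * Q1 * xmax * T := by rw [hsumw]; ring
end

section
/- Let a mesh of ]0, x_max] be given that is quasi-uniform with constant C ≥ 1 (i.e., (max_i Δx_i)/(min_i Δx_i) ≤ C), with indices α_{i,k} as defined, and let β satisfy 0 ≤ β(x_j, x_k) ≤ Q for all cell centers. Let C_T > 0 and let n, n̂ ∈ ℝ^I be componentwise nonnegative with Σ_{i=1}^I n_i Δx_i ≤ C_T and Σ_{i=1}^I n̂_i Δx_i ≤ C_T. With ΔJ^{agg}_i(n) = (J^{agg}_{i+1/2}(n) − J^{agg}_{i−1/2}(n))/(x_i Δx_i), one has Σ_{i=1}^I Δx_i |ΔJ^{agg}_i(n)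 − ΔJ^{agg}_i(n̂)| ≤ (4C + 6) Q C_T Σ_{i=1}^I Δx_i |n_i − n̂_i|. -/
/-- Numerical aggregation flux `J^{agg}_{i+1/2}(n)`.  Here `a i k` encodes the index
`α_{i,k} − 1`, i.e. `x_{i+1/2} − x_k ∈ Λ_{a i k}`. -/
noncomputable def Jagg (I : ℕ) (xh : ℕ → ℝ) (a : ℕ → ℕ → ℕ) (β : ℝ → ℝ → ℝ)
    (n : ℕ → ℝ) (i : ℕ) : ℝ :=
  ∑ k ∈ Finset.Icc 1 i, meshC xh k * n k * meshW xh k *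
    ((∑ j ∈ Finset.Icc (a i k + 1) I, n j * β (meshC xh j) (meshC xh k) * meshW xh j) +
      n (a i k) * β (meshC xh (a i k)) (meshC xh k) * (xh (a i k) - (xh i - meshC xh k)))

/-- The aggregation flux difference `ΔJ^{agg}_i(n) = (J^{agg}_{i+1/2}(n) − J^{agg}_{i−1/2}(n))/(x_i Δx_i)`. -/
noncomputable def DJagg (I : ℕ) (xh : ℕ → ℝ) (a : ℕ → ℕ → ℕ) (β : ℝ → ℝ → ℝ)
    (n : ℕ → ℝ) (i : ℕ) : ℝ :=
  (Jagg I xh a β n i - Jagg I xh a β n (i - 1)) / (meshC xh i * meshW xh i)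

namespace AggAux

noncomputable def g (xh : ℕ → ℝ) (k i j : ℕ) : ℝ :=
  xh j - min (max (xh i - meshC xh k) (xh (j - 1))) (xh j)

lemma g_nonneg (xh : ℕ → ℝ) (k i j : ℕ) : 0 ≤ g xh k i j :=
  sub_nonneg.mpr (min_le_right _ _)

lemma g_le (xh : ℕ → ℝ) (k i j : ℕ) (h : xh (j - 1) ≤ xh j) :
    g xh k i j ≤ meshW xh j :=
  sub_le_sub_left (le_min (le_max_right _ _) h) _

lemma g_anti (xh : ℕ → ℝ) (k i i' j : ℕ) (h : xh i' ≤ xh i) :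
    g xh k i j ≤ g xh k i' j :=
  sub_le_sub_left (min_le_min (max_le_max (by linarith) le_rfl) le_rfl) _

noncomputable def S (I : ℕ) (xh : ℕ → ℝ) (β : ℝ → ℝ → ℝ) (p : ℕ → ℝ) (i k : ℕ) : ℝ :=
  ∑ j ∈ Finset.Icc 1 I, p j * β (meshC xh j) (meshC xh k) * g xh k i j

noncomputable def D (I : ℕ) (xh : ℕ → ℝ) (p : ℕ → ℝ) (i k : ℕ) : ℝ :=
  ∑ j ∈ Finset.Icc 1 I, p j * (g xh k (i - 1) j - g xh k i j)

lemma S_bound (I : ℕ) (xh : ℕ → ℝ) (β : ℝ → ℝ → ℝ) (p : ℕ → ℝ) (Q M : ℝ) (i k : ℕ)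
    (hQ : 0 ≤ Q)
    (hβk : ∀ j ∈ Finset.Icc 1 I,
      0 ≤ β (meshC xh j) (meshC xh k) ∧ β (meshC xh j) (meshC xh k) ≤ Q)
    (hw : ∀ j ∈ Finset.Icc 1 I, xh (j - 1) ≤ xh j)
    (hM : (∑ j ∈ Finset.Icc 1 I, |p j| * meshW xh j) ≤ M) :
    |S I xh β p i k| ≤ Q * M := by
  calc |S I xh β p i k| ≤ ∑ j ∈ Finset.Icc 1 I, |p j * β (meshC xh j) (meshC xh k) * g xh k i j| :=
        Finset.abs_sum_le_sum_abs _ _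
    _ ≤ ∑ j ∈ Finset.Icc 1 I, Q * (|p j| * meshW xh j) := by
        refine Finset.sum_le_sum fun j hj => ?_
        obtain ⟨hb0, hbQ⟩ := hβk j hj
        rw [abs_mul, abs_mul, abs_of_nonneg hb0, abs_of_nonneg (g_nonneg xh k i j)]
        have h1 : β (meshC xh j) (meshC xh k) * g xh k i j ≤ Q * meshW xh j :=
          mul_le_mul hbQ (g_le xh k i j (hw j hj)) (g_nonneg xh k i j) hQ
        calc |p j| * β (meshC xh j) (meshC xh k) * g xh k i j
            = |p j| * (β (meshC xh j) (meshC xh k) * g xh k i j) := by ring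
          _ ≤ |p j| * (Q * meshW xh j) := mul_le_mul_of_nonneg_left h1 (abs_nonneg _)
          _ = Q * (|p j| * meshW xh j) := by ring
    _ = Q * ∑ j ∈ Finset.Icc 1 I, |p j| * meshW xh j := by rw [Finset.mul_sum]
    _ ≤ Q * M := mul_le_mul_of_nonneg_left hM hQ

lemma Sdiff_bound (I : ℕ) (xh : ℕ → ℝ) (β : ℝ → ℝ → ℝ) (p : ℕ → ℝ) (Q : ℝ) (i k : ℕ)
    (hβk : ∀ j ∈ Finset.Icc 1 I,
      0 ≤ β (meshC xh j) (meshC xh k) ∧ β (meshC xh j) (meshC xh k) ≤ Q)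
    (hg : ∀ j, g xh k i j ≤ g xh k (i - 1) j) :
    |S I xh β p i k - S I xh β p (i - 1) k| ≤ Q * D I xh (fun j => |p j|) i k := by
  rw [S, S, ← Finset.sum_sub_distrib, D, Finset.mul_sum]
  refine le_trans (Finset.abs_sum_le_sum_abs _ _) (Finset.sum_le_sum fun j hj => ?_)
  obtain ⟨hb0, hbQ⟩ := hβk j hj
  have hd : 0 ≤ g xh k (i - 1) j - g xh k i j := sub_nonneg.mpr (hg j)
  have h1 : p j * β (meshC xh j) (meshC xh k) * g xh k i j -
      p j * β (meshC xh j) (meshC xh k) * g xh k (i - 1) j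
      = -(p j * (β (meshC xh j) (meshC xh k) * (g xh k (i - 1) j - g xh k i j))) := by ring
  rw [h1, abs_neg, abs_mul, abs_mul, abs_of_nonneg hb0, abs_of_nonneg hd]
  have h2 : β (meshC xh j) (meshC xh k) * (g xh k (i - 1) j - g xh k i j)
      ≤ Q * (g xh k (i - 1) j - g xh k i j) := mul_le_mul_of_nonneg_right hbQ hd
  calc |p j| * (β (meshC xh j) (meshC xh k) * (g xh k (i - 1) j - g xh k i j))
      ≤ |p j| * (Q * (g xh k (i - 1) j - g xh k i j)) :=
        mul_le_mul_of_nonneg_left h2 (abs_nonneg _)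
    _ = Q * (|p j| * (g xh k (i - 1) j - g xh k i j)) := by ring

lemma D_nonneg (I : ℕ) (xh : ℕ → ℝ) (p : ℕ → ℝ) (i k : ℕ)
    (hp : ∀ j ∈ Finset.Icc 1 I, 0 ≤ p j)
    (hg : ∀ j, g xh k i j ≤ g xh k (i - 1) j) :
    0 ≤ D I xh p i k :=
  Finset.sum_nonneg fun j hj => mul_nonneg (hp j hj) (sub_nonneg.mpr (hg j))

lemma sum_telescope (h : ℕ → ℝ) {k N : ℕ} (hk : k ≤ N) :
    ∑ i ∈ Finset.Ioc k N, (h (i - 1) - h i) = h k - h N := by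
  induction N, hk using Nat.le_induction with
  | base => simp
  | succ N hk ih =>
      rw [Finset.sum_Ioc_succ_top hk, ih]
      simp only [Nat.add_sub_cancel]
      ring

lemma D_sum_bound (I : ℕ) (xh : ℕ → ℝ) (p : ℕ → ℝ) (M : ℝ) (k : ℕ) (hkI : k ≤ I)
    (hp : ∀ j ∈ Finset.Icc 1 I, 0 ≤ p j)
    (hw : ∀ j ∈ Finset.Icc 1 I, xh (j - 1) ≤ xh j)
    (hM : (∑ j ∈ Finset.Icc 1 I, p j * meshW xh j) ≤ M) :
    ∑ i ∈ Finset.Icc (k + 1) I, D I xh p i k ≤ M := by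
  have e2 : Finset.Icc (k + 1) I = Finset.Ioc k I := Finset.Icc_add_one_left_eq_Ioc k I
  rw [e2]
  unfold D
  rw [Finset.sum_comm]
  refine le_trans (Finset.sum_le_sum (fun j hj => ?_)) hM
  rw [← Finset.mul_sum, sum_telescope (fun i => g xh k i j) hkI]
  refine mul_le_mul_of_nonneg_left ?_ (hp j hj)
  have := g_nonneg xh k I j
  have := g_le xh k k j (hw j hj)
  linarith

lemma bracket_eq (I : ℕ) (xh : ℕ → ℝ) (bk : ℕ → ℝ) (p : ℕ → ℝ)
    (hle : ∀ m l, m ≤ l → l ≤ I → xh m ≤ xh l)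
    (i k A : ℕ) (hA1 : 1 ≤ A) (hAI : A ≤ I)
    (ht1 : xh (A - 1) < xh i - meshC xh k) (ht2 : xh i - meshC xh k ≤ xh A) :
    (∑ j ∈ Finset.Icc (A + 1) I, p j * bk j * meshW xh j) +
      p A * bk A * (xh A - (xh i - meshC xh k))
      = ∑ j ∈ Finset.Icc 1 I, p j * bk j * g xh k i j := by
  have e1 : Finset.Icc 1 I = Finset.Ioc 0 I := by
    rw [show (1:ℕ) = 0 + 1 from rfl, Finset.Icc_add_one_left_eq_Ioc]
  have e2 : Finset.Icc (A+1) I = Finset.Ioc A I := Finset.Icc_add_one_left_eq_Ioc A I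
  rw [e1, e2]
  rw [← Finset.sum_Ioc_consecutive _ (Nat.zero_le A) hAI]
  rw [← Finset.sum_Ioc_consecutive _ (Nat.zero_le (A-1)) (by omega : A - 1 ≤ A)]
  have h1 : ∑ j ∈ Finset.Ioc 0 (A-1), p j * bk j * g xh k i j = 0 := by
    refine Finset.sum_eq_zero fun j hj => ?_
    obtain ⟨hj0, hj1⟩ := Finset.mem_Ioc.mp hj
    have hxj : xh j ≤ xh (A-1) := hle j (A-1) hj1 (by omega)
    have : min (max (xh i - meshC xh k) (xh (j - 1))) (xh j) = xh j :=
      min_eq_right (le_trans (le_of_lt (lt_of_le_of_lt hxj ht1)) (le_max_left _ _))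
    simp [g, this]
  have h2 : ∑ j ∈ Finset.Ioc (A-1) A, p j * bk j * g xh k i j
      = p A * bk A * (xh A - (xh i - meshC xh k)) := by
    rw [show Finset.Ioc (A-1) A = {A} by ext x; simp [Finset.mem_Ioc]; omega]
    rw [Finset.sum_singleton]
    have : min (max (xh i - meshC xh k) (xh (A - 1))) (xh A) = xh i - meshC xh k := by
      rw [max_eq_left (le_of_lt ht1), min_eq_left ht2]
    simp [g, this]
  have h3 : ∑ j ∈ Finset.Ioc A I, p j * bk j * g xh k i j
      = ∑ j ∈ Finset.Ioc A I, p j * bk j * meshW xh j := by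
    refine Finset.sum_congr rfl fun j hj => ?_
    obtain ⟨hjA, hjI⟩ := Finset.mem_Ioc.mp hj
    have hxa : xh A ≤ xh (j - 1) := hle A (j-1) (by omega) (by omega)
    have : min (max (xh i - meshC xh k) (xh (j - 1))) (xh j) = xh (j - 1) := by
      rw [max_eq_right (le_trans ht2 hxa), min_eq_left (hle (j-1) j (by omega) hjI)]
    simp [g, this, meshW]
  rw [h1, h2, h3]; ring

lemma Jagg_eq (I : ℕ) (xh : ℕ → ℝ) (aa : ℕ → ℕ → ℕ) (β : ℝ → ℝ → ℝ) (p : ℕ → ℝ)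
    (hle : ∀ m l, m ≤ l → l ≤ I → xh m ≤ xh l)
    (ha : ∀ i k, 1 ≤ k → k ≤ i → i ≤ I →
      1 ≤ aa i k ∧ aa i k ≤ I ∧
        xh i - meshC xh k ∈ Set.Ioc (xh (aa i k - 1)) (xh (aa i k)))
    (i : ℕ) (hi : i ≤ I) :
    Jagg I xh aa β p i = ∑ k ∈ Finset.Icc 1 i, meshC xh k * p k * meshW xh k *
      S I xh β p i k := by
  unfold Jagg S
  refine Finset.sum_congr rfl fun k hk => ?_
  obtain ⟨hk1, hki⟩ := Finset.mem_Icc.mp hk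
  obtain ⟨h1, h2, h3⟩ := ha i k hk1 hki hi
  rw [← bracket_eq I xh (fun j => β (meshC xh j) (meshC xh k)) p hle i k (aa i k) h1 h2 h3.1 h3.2]

end AggAux

/-- Aggregation part of Lemma 3.5: on a quasi-uniform mesh with constant `C`, for a bounded
nonnegative kernel `β ≤ Q` and nonnegative vectors with total number of particles bounded
by `C_T`, the map `ΔJ^{agg}` is Lipschitz in the discrete L¹ norm with constant
`(4C + 6) Q C_T`. -/
theorem stmt6 (I : ℕ) (xmax C Q CT : ℝ) (hI : 1 ≤ I) (hC : 1 ≤ C) (hCT : 0 < CT)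
    (xh : ℕ → ℝ) (h0 : xh 0 = 0) (hImax : xh I = xmax)
    (hmono : ∀ m, m < I → xh m < xh (m + 1))
    (hqu : ∀ m ∈ Finset.Icc 1 I, ∀ l ∈ Finset.Icc 1 I,
      meshW xh m ≤ C * meshW xh l)
    (a : ℕ → ℕ → ℕ)
    (ha : ∀ i k, 1 ≤ k → k ≤ i → i ≤ I →
      1 ≤ a i k ∧ a i k ≤ I ∧
        xh i - meshC xh k ∈ Set.Ioc (xh (a i k - 1)) (xh (a i k)))
    (β : ℝ → ℝ → ℝ)
    (hβ : ∀ j ∈ Finset.Icc 1 I, ∀ k ∈ Finset.Icc 1 I,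
      0 ≤ β (meshC xh j) (meshC xh k) ∧ β (meshC xh j) (meshC xh k) ≤ Q)
    (n nhat : ℕ → ℝ)
    (hn : ∀ i ∈ Finset.Icc 1 I, 0 ≤ n i) (hnhat : ∀ i ∈ Finset.Icc 1 I, 0 ≤ nhat i)
    (hnN : (∑ i ∈ Finset.Icc 1 I, n i * meshW xh i) ≤ CT)
    (hnhatN : (∑ i ∈ Finset.Icc 1 I, nhat i * meshW xh i) ≤ CT) :
    (∑ i ∈ Finset.Icc 1 I, meshW xh i * |DJagg I xh a β n i - DJagg I xh a β nhat i|) ≤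
      (4 * C + 6) * Q * CT * ∑ i ∈ Finset.Icc 1 I, meshW xh i * |n i - nhat i| := by
  classical
  -- basic mesh facts
  have hle : ∀ m l, m ≤ l → l ≤ I → xh m ≤ xh l := by
    intro m l hml hlI
    induction l with
    | zero => have : m = 0 := by omega
              simp [this]
    | succ l ih =>
        rcases Nat.lt_or_ge m (l+1) with h | h
        · exact le_trans (ih (by omega) (by omega)) (le_of_lt (hmono l (by omega)))
        · have : m = l + 1 := by omega
          simp [this]
  have hwpos : ∀ i, 1 ≤ i → i ≤ I → 0 < meshW xh i := by
    intro i h1 h2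
    have h4 := hmono (i-1) (by omega)
    rw [Nat.sub_add_cancel h1] at h4
    exact sub_pos.mpr h4
  have hcpos : ∀ i, 1 ≤ i → i ≤ I → 0 < meshC xh i := by
    intro i h1 h2
    have h3 : 0 ≤ xh (i-1) := h0 ▸ hle 0 (i-1) (by omega) (by omega)
    have h4 := hmono (i-1) (by omega)
    rw [Nat.sub_add_cancel h1] at h4
    unfold meshC
    linarith
  have hcmono : ∀ k i, k ≤ i → i ≤ I → meshC xh k ≤ meshC xh i := by
    intro k i hki hiI
    have h1 := hle (k-1) (i-1) (by omega) (by omega)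
    have h2 := hle k i hki hiI
    unfold meshC
    linarith
  have hw' : ∀ j ∈ Finset.Icc 1 I, xh (j - 1) ≤ xh j := by
    intro j hj
    obtain ⟨h1, h2⟩ := Finset.mem_Icc.mp hj
    have := hwpos j h1 h2
    unfold meshW at this
    linarith
  have h1I : (1:ℕ) ∈ Finset.Icc 1 I := Finset.mem_Icc.mpr ⟨le_rfl, hI⟩
  have hQ0 : 0 ≤ Q := le_trans (hβ 1 h1I 1 h1I).1 (hβ 1 h1I 1 h1I).2
  set E := ∑ i ∈ Finset.Icc 1 I, meshW xh i * |n i - nhat i| with hEdef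
  have hE0 : 0 ≤ E :=
    Finset.sum_nonneg fun i hi => mul_nonneg (le_of_lt (hwpos i (Finset.mem_Icc.mp hi).1 (Finset.mem_Icc.mp hi).2)) (abs_nonneg _)
  have hJ : ∀ (p : ℕ → ℝ) (i : ℕ), i ≤ I → Jagg I xh a β p i
      = ∑ k ∈ Finset.Icc 1 i, meshC xh k * p k * meshW xh k * AggAux.S I xh β p i k :=
    fun p i hi => AggAux.Jagg_eq I xh a β p hle ha i hi
  have hS_lin : ∀ i k, AggAux.S I xh β n i k - AggAux.S I xh β nhat i k
      = AggAux.S I xh β (fun j => n j - nhat j) i k := by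
    intro i k
    rw [AggAux.S, AggAux.S, AggAux.S, ← Finset.sum_sub_distrib]
    exact Finset.sum_congr rfl fun j _ => by ring
  -- abs-sum facts for S_bound
  have hMn : (∑ j ∈ Finset.Icc 1 I, |n j| * meshW xh j) ≤ CT := by
    refine le_trans (le_of_eq (Finset.sum_congr rfl fun j hj => by rw [abs_of_nonneg (hn j hj)])) hnN
  have hMe : (∑ j ∈ Finset.Icc 1 I, |n j - nhat j| * meshW xh j) ≤ E := by
    refine le_of_eq (Finset.sum_congr rfl fun j hj => by rw [mul_comm])
  -- key pointwise bound
  have hkey : ∀ i ∈ Finset.Icc 1 I,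
      meshW xh i * |DJagg I xh a β n i - DJagg I xh a β nhat i| ≤
        Q * CT * (meshW xh i * |n i - nhat i|) + Q * E * (nhat i * meshW xh i)
        + Q * ∑ k ∈ Finset.Icc 1 (i-1), meshW xh k *
            (|n k - nhat k| * AggAux.D I xh n i k
              + nhat k * AggAux.D I xh (fun j => |n j - nhat j|) i k) := by
    intro i hi
    obtain ⟨hi1, hiI⟩ := Finset.mem_Icc.mp hi
    have hci := hcpos i hi1 hiI
    have hwi := hwpos i hi1 hiI
    have hgmono : ∀ k j, AggAux.g xh k i j ≤ AggAux.g xh k (i-1) j :=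
      fun k j => AggAux.g_anti xh k i (i-1) j (hle (i-1) i (by omega) hiI)
    set Jd := (Jagg I xh a β n i - Jagg I xh a β n (i-1))
      - (Jagg I xh a β nhat i - Jagg I xh a β nhat (i-1)) with hJdd
    have hstep1 : meshW xh i * |DJagg I xh a β n i - DJagg I xh a β nhat i|
        = |Jd| / meshC xh i := by
      rw [DJagg, DJagg, div_sub_div_same, abs_div,
        abs_of_pos (mul_pos hci hwi)]
      rw [hJdd]
      field_simp
    have hins : Finset.Icc 1 i = insert i (Finset.Icc 1 (i-1)) := by
      ext x; simp [Finset.mem_Icc]; omega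
    have hnotmem : i ∉ Finset.Icc 1 (i-1) := by simp [Finset.mem_Icc]; omega
    have hsum : ∑ k ∈ Finset.Icc 1 (i-1), meshC xh k * meshW xh k *
          ((n k - nhat k) * (AggAux.S I xh β n i k - AggAux.S I xh β n (i-1) k)
            + nhat k * (AggAux.S I xh β (fun j => n j - nhat j) i k
                - AggAux.S I xh β (fun j => n j - nhat j) (i-1) k))
        = (∑ k ∈ Finset.Icc 1 (i-1), meshC xh k * n k * meshW xh k * AggAux.S I xh β n i k)
          - (∑ k ∈ Finset.Icc 1 (i-1), meshC xh k * n k * meshW xh k * AggAux.S I xh β n (i-1) k)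
          - ((∑ k ∈ Finset.Icc 1 (i-1), meshC xh k * nhat k * meshW xh k * AggAux.S I xh β nhat i k)
            - (∑ k ∈ Finset.Icc 1 (i-1), meshC xh k * nhat k * meshW xh k * AggAux.S I xh β nhat (i-1) k)) := by
      rw [← Finset.sum_sub_distrib, ← Finset.sum_sub_distrib, ← Finset.sum_sub_distrib]
      refine Finset.sum_congr rfl fun k _ => ?_
      rw [← hS_lin i k, ← hS_lin (i-1) k]
      ring
    have hid : Jd = meshC xh i * meshW xh i *
          ((n i - nhat i) * AggAux.S I xh β n i i
            + nhat i * AggAux.S I xh β (fun j => n j - nhat j) i i)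
        + ∑ k ∈ Finset.Icc 1 (i-1), meshC xh k * meshW xh k *
          ((n k - nhat k) * (AggAux.S I xh β n i k - AggAux.S I xh β n (i-1) k)
            + nhat k * (AggAux.S I xh β (fun j => n j - nhat j) i k
                - AggAux.S I xh β (fun j => n j - nhat j) (i-1) k)) := by
      rw [hJdd, hJ n i hiI, hJ n (i-1) (by omega), hJ nhat i hiI, hJ nhat (i-1) (by omega),
        hins, Finset.sum_insert hnotmem, Finset.sum_insert hnotmem, hsum, ← hS_lin i i]
      ring
    -- bounds
    have hβi : ∀ j ∈ Finset.Icc 1 I,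
        0 ≤ β (meshC xh j) (meshC xh i) ∧ β (meshC xh j) (meshC xh i) ≤ Q :=
      fun j hj => hβ j hj i hi
    have hSn : |AggAux.S I xh β n i i| ≤ Q * CT :=
      AggAux.S_bound I xh β n Q CT i i hQ0 hβi hw' hMn
    have hSe : |AggAux.S I xh β (fun j => n j - nhat j) i i| ≤ Q * E :=
      AggAux.S_bound I xh β (fun j => n j - nhat j) Q E i i hQ0 hβi hw' hMe
    have htop : |meshC xh i * meshW xh i *
          ((n i - nhat i) * AggAux.S I xh β n i i
            + nhat i * AggAux.S I xh β (fun j => n j - nhat j) i i)|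
        ≤ meshC xh i * (meshW xh i * (|n i - nhat i| * (Q * CT) + nhat i * (Q * E))) := by
      rw [abs_mul, abs_of_pos (mul_pos hci hwi)]
      have h1 : |(n i - nhat i) * AggAux.S I xh β n i i
            + nhat i * AggAux.S I xh β (fun j => n j - nhat j) i i|
          ≤ |n i - nhat i| * (Q * CT) + nhat i * (Q * E) := by
        refine le_trans (abs_add_le _ _) ?_
        rw [abs_mul, abs_mul, abs_of_nonneg (hnhat i hi)]
        exact add_le_add (mul_le_mul_of_nonneg_left hSn (abs_nonneg _))
          (mul_le_mul_of_nonneg_left hSe (hnhat i hi))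
      calc meshC xh i * meshW xh i * |(n i - nhat i) * AggAux.S I xh β n i i
            + nhat i * AggAux.S I xh β (fun j => n j - nhat j) i i|
          ≤ meshC xh i * meshW xh i * (|n i - nhat i| * (Q * CT) + nhat i * (Q * E)) := by
            refine mul_le_mul_of_nonneg_left h1 (le_of_lt (mul_pos hci hwi))
        _ = meshC xh i * (meshW xh i * (|n i - nhat i| * (Q * CT) + nhat i * (Q * E))) := by ring
    have hterm : ∀ k ∈ Finset.Icc 1 (i-1),
        |meshC xh k * meshW xh k *
          ((n k - nhat k) * (AggAux.S I xh β n i k - AggAux.S I xh β n (i-1) k)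
            + nhat k * (AggAux.S I xh β (fun j => n j - nhat j) i k
                - AggAux.S I xh β (fun j => n j - nhat j) (i-1) k))|
        ≤ (meshC xh i * Q) * (meshW xh k *
            (|n k - nhat k| * AggAux.D I xh n i k
              + nhat k * AggAux.D I xh (fun j => |n j - nhat j|) i k)) := by
      intro k hk
      obtain ⟨hk1, hki⟩ := Finset.mem_Icc.mp hk
      have hkI : k ∈ Finset.Icc 1 I := Finset.mem_Icc.mpr ⟨hk1, by omega⟩
      have hck := hcpos k hk1 (by omega)
      have hwk := hwpos k hk1 (by omega)
      have hβk : ∀ j ∈ Finset.Icc 1 I,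
          0 ≤ β (meshC xh j) (meshC xh k) ∧ β (meshC xh j) (meshC xh k) ≤ Q :=
        fun j hj => hβ j hj k hkI
      have hΔn : |AggAux.S I xh β n i k - AggAux.S I xh β n (i-1) k|
          ≤ Q * AggAux.D I xh n i k := by
        have := AggAux.Sdiff_bound I xh β n Q i k hβk (fun j => hgmono k j)
        have hDeq : AggAux.D I xh (fun j => |n j|) i k = AggAux.D I xh n i k := by
          unfold AggAux.D
          refine Finset.sum_congr rfl fun j hj => ?_
          simp only
          rw [abs_of_nonneg (hn j hj)]
        rwa [hDeq] at this
      have hΔe : |AggAux.S I xh β (fun j => n j - nhat j) i k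
            - AggAux.S I xh β (fun j => n j - nhat j) (i-1) k|
          ≤ Q * AggAux.D I xh (fun j => |n j - nhat j|) i k :=
        AggAux.Sdiff_bound I xh β (fun j => n j - nhat j) Q i k hβk (fun j => hgmono k j)
      have hDn0 : 0 ≤ AggAux.D I xh n i k :=
        AggAux.D_nonneg I xh n i k hn (fun j => hgmono k j)
      have hDe0 : 0 ≤ AggAux.D I xh (fun j => |n j - nhat j|) i k :=
        AggAux.D_nonneg I xh (fun j => |n j - nhat j|) i k (fun j _ => abs_nonneg _)
          (fun j => hgmono k j)
      have h1 : |(n k - nhat k) * (AggAux.S I xh β n i k - AggAux.S I xh β n (i-1) k)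
            + nhat k * (AggAux.S I xh β (fun j => n j - nhat j) i k
                - AggAux.S I xh β (fun j => n j - nhat j) (i-1) k)|
          ≤ Q * (|n k - nhat k| * AggAux.D I xh n i k
              + nhat k * AggAux.D I xh (fun j => |n j - nhat j|) i k) := by
        refine le_trans (abs_add_le _ _) ?_
        rw [abs_mul, abs_mul, abs_of_nonneg (hnhat k hkI)]
        have := add_le_add (mul_le_mul_of_nonneg_left hΔn (abs_nonneg (n k - nhat k)))
          (mul_le_mul_of_nonneg_left hΔe (hnhat k hkI))
        calc |n k - nhat k| * |AggAux.S I xh β n i k - AggAux.S I xh β n (i-1) k|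
              + nhat k * |AggAux.S I xh β (fun j => n j - nhat j) i k
                - AggAux.S I xh β (fun j => n j - nhat j) (i-1) k|
            ≤ |n k - nhat k| * (Q * AggAux.D I xh n i k)
              + nhat k * (Q * AggAux.D I xh (fun j => |n j - nhat j|) i k) := this
          _ = Q * (|n k - nhat k| * AggAux.D I xh n i k
              + nhat k * AggAux.D I xh (fun j => |n j - nhat j|) i k) := by ring
      have h2 : 0 ≤ |n k - nhat k| * AggAux.D I xh n i k
          + nhat k * AggAux.D I xh (fun j => |n j - nhat j|) i k :=
        add_nonneg (mul_nonneg (abs_nonneg _) hDn0) (mul_nonneg (hnhat k hkI) hDe0)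
      rw [abs_mul, abs_of_pos (mul_pos hck hwk)]
      calc meshC xh k * meshW xh k * |(n k - nhat k) * (AggAux.S I xh β n i k - AggAux.S I xh β n (i-1) k)
            + nhat k * (AggAux.S I xh β (fun j => n j - nhat j) i k
                - AggAux.S I xh β (fun j => n j - nhat j) (i-1) k)|
          ≤ meshC xh k * meshW xh k * (Q * (|n k - nhat k| * AggAux.D I xh n i k
              + nhat k * AggAux.D I xh (fun j => |n j - nhat j|) i k)) :=
            mul_le_mul_of_nonneg_left h1 (le_of_lt (mul_pos hck hwk))
        _ ≤ meshC xh i * meshW xh k * (Q * (|n k - nhat k| * AggAux.D I xh n i k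
              + nhat k * AggAux.D I xh (fun j => |n j - nhat j|) i k)) := by
            have hcc : meshC xh k ≤ meshC xh i := hcmono k i (by omega) hiI
            have : 0 ≤ meshW xh k * (Q * (|n k - nhat k| * AggAux.D I xh n i k
              + nhat k * AggAux.D I xh (fun j => |n j - nhat j|) i k)) :=
              mul_nonneg (le_of_lt hwk) (mul_nonneg hQ0 h2)
            nlinarith
        _ = (meshC xh i * Q) * (meshW xh k *
            (|n k - nhat k| * AggAux.D I xh n i k
              + nhat k * AggAux.D I xh (fun j => |n j - nhat j|) i k)) := by ring
    -- assemble
    rw [hstep1, div_le_iff₀ hci]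
    calc |Jd| ≤ |meshC xh i * meshW xh i *
          ((n i - nhat i) * AggAux.S I xh β n i i
            + nhat i * AggAux.S I xh β (fun j => n j - nhat j) i i)|
        + |∑ k ∈ Finset.Icc 1 (i-1), meshC xh k * meshW xh k *
          ((n k - nhat k) * (AggAux.S I xh β n i k - AggAux.S I xh β n (i-1) k)
            + nhat k * (AggAux.S I xh β (fun j => n j - nhat j) i k
                - AggAux.S I xh β (fun j => n j - nhat j) (i-1) k))| := by
          rw [hid]; exact abs_add_le _ _
      _ ≤ meshC xh i * (meshW xh i * (|n i - nhat i| * (Q * CT) + nhat i * (Q * E)))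
        + ∑ k ∈ Finset.Icc 1 (i-1), (meshC xh i * Q) * (meshW xh k *
            (|n k - nhat k| * AggAux.D I xh n i k
              + nhat k * AggAux.D I xh (fun j => |n j - nhat j|) i k)) :=
          add_le_add htop (le_trans (Finset.abs_sum_le_sum_abs _ _)
            (Finset.sum_le_sum hterm))
      _ = (Q * CT * (meshW xh i * |n i - nhat i|) + Q * E * (nhat i * meshW xh i)
        + Q * ∑ k ∈ Finset.Icc 1 (i-1), meshW xh k *
            (|n k - nhat k| * AggAux.D I xh n i k
              + nhat k * AggAux.D I xh (fun j => |n j - nhat j|) i k)) * meshC xh i := by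
          rw [← Finset.mul_sum]
          ring
  -- final assembly
  have hdouble : (∑ i ∈ Finset.Icc 1 I, ∑ k ∈ Finset.Icc 1 (i-1), meshW xh k *
        (|n k - nhat k| * AggAux.D I xh n i k
          + nhat k * AggAux.D I xh (fun j => |n j - nhat j|) i k)) ≤ CT * E + CT * E := by
    have hmem : ∀ (i k : ℕ), i ∈ Finset.Icc 1 I ∧ k ∈ Finset.Icc 1 (i-1)
        ↔ i ∈ Finset.Icc (k+1) I ∧ k ∈ Finset.Icc 1 I := by
      intro i k; simp only [Finset.mem_Icc]; omega
    rw [Finset.sum_comm' hmem]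
    have hbd : ∀ k ∈ Finset.Icc 1 I, (∑ i ∈ Finset.Icc (k+1) I, meshW xh k *
          (|n k - nhat k| * AggAux.D I xh n i k
            + nhat k * AggAux.D I xh (fun j => |n j - nhat j|) i k))
        ≤ meshW xh k * |n k - nhat k| * CT + meshW xh k * nhat k * E := by
      intro k hk
      obtain ⟨hk1, hkI⟩ := Finset.mem_Icc.mp hk
      have e1 : ∑ i ∈ Finset.Icc (k+1) I, meshW xh k * (|n k - nhat k| * AggAux.D I xh n i k)
          = meshW xh k * |n k - nhat k| * ∑ i ∈ Finset.Icc (k+1) I, AggAux.D I xh n i k := by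
        rw [Finset.mul_sum]
        exact Finset.sum_congr rfl fun i _ => by ring
      have e2 : ∑ i ∈ Finset.Icc (k+1) I, meshW xh k *
            (nhat k * AggAux.D I xh (fun j => |n j - nhat j|) i k)
          = meshW xh k * nhat k *
            ∑ i ∈ Finset.Icc (k+1) I, AggAux.D I xh (fun j => |n j - nhat j|) i k := by
        rw [Finset.mul_sum]
        exact Finset.sum_congr rfl fun i _ => by ring
      have hwk := hwpos k hk1 hkI
      calc (∑ i ∈ Finset.Icc (k+1) I, meshW xh k *
          (|n k - nhat k| * AggAux.D I xh n i k
            + nhat k * AggAux.D I xh (fun j => |n j - nhat j|) i k))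
          = (∑ i ∈ Finset.Icc (k+1) I, meshW xh k * (|n k - nhat k| * AggAux.D I xh n i k))
            + ∑ i ∈ Finset.Icc (k+1) I, meshW xh k *
              (nhat k * AggAux.D I xh (fun j => |n j - nhat j|) i k) := by
            rw [← Finset.sum_add_distrib]
            exact Finset.sum_congr rfl fun i _ => by ring
        _ = meshW xh k * |n k - nhat k| * (∑ i ∈ Finset.Icc (k+1) I, AggAux.D I xh n i k)
            + meshW xh k * nhat k *
              ∑ i ∈ Finset.Icc (k+1) I, AggAux.D I xh (fun j => |n j - nhat j|) i k := by
            rw [e1, e2]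
        _ ≤ meshW xh k * |n k - nhat k| * CT + meshW xh k * nhat k * E := by
            refine add_le_add ?_ ?_
            · exact mul_le_mul_of_nonneg_left
                (AggAux.D_sum_bound I xh n CT k hkI hn hw' hnN)
                (mul_nonneg (le_of_lt hwk) (abs_nonneg _))
            · refine mul_le_mul_of_nonneg_left
                (AggAux.D_sum_bound I xh (fun j => |n j - nhat j|) E k hkI
                  (fun j _ => abs_nonneg _) hw' hMe)
                (mul_nonneg (le_of_lt hwk) (hnhat k hk))
    calc (∑ k ∈ Finset.Icc 1 I, ∑ i ∈ Finset.Icc (k+1) I, meshW xh k *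
          (|n k - nhat k| * AggAux.D I xh n i k
            + nhat k * AggAux.D I xh (fun j => |n j - nhat j|) i k))
        ≤ ∑ k ∈ Finset.Icc 1 I, (meshW xh k * |n k - nhat k| * CT + meshW xh k * nhat k * E) :=
          Finset.sum_le_sum hbd
      _ = (∑ k ∈ Finset.Icc 1 I, meshW xh k * |n k - nhat k|) * CT
          + (∑ k ∈ Finset.Icc 1 I, nhat k * meshW xh k) * E := by
          rw [Finset.sum_add_distrib, ← Finset.sum_mul, ← Finset.sum_mul]
          congr 1
          congr 1
          exact Finset.sum_congr rfl fun k _ => mul_comm _ _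
      _ ≤ CT * E + CT * E := by
          have h1 : (∑ k ∈ Finset.Icc 1 I, meshW xh k * |n k - nhat k|) = E := hEdef.symm
          rw [h1]
          exact add_le_add (le_of_eq (mul_comm E CT)) (mul_le_mul_of_nonneg_right hnhatN hE0)
  calc (∑ i ∈ Finset.Icc 1 I, meshW xh i * |DJagg I xh a β n i - DJagg I xh a β nhat i|)
      ≤ ∑ i ∈ Finset.Icc 1 I, (Q * CT * (meshW xh i * |n i - nhat i|)
          + Q * E * (nhat i * meshW xh i)
          + Q * ∑ k ∈ Finset.Icc 1 (i-1), meshW xh k *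
              (|n k - nhat k| * AggAux.D I xh n i k
                + nhat k * AggAux.D I xh (fun j => |n j - nhat j|) i k)) :=
        Finset.sum_le_sum hkey
    _ = Q * CT * E + Q * E * (∑ i ∈ Finset.Icc 1 I, nhat i * meshW xh i)
        + Q * ∑ i ∈ Finset.Icc 1 I, ∑ k ∈ Finset.Icc 1 (i-1), meshW xh k *
            (|n k - nhat k| * AggAux.D I xh n i k
              + nhat k * AggAux.D I xh (fun j => |n j - nhat j|) i k) := by
        rw [Finset.sum_add_distrib, Finset.sum_add_distrib, ← Finset.mul_sum, ← Finset.mul_sum,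
          ← Finset.mul_sum, ← hEdef]
    _ ≤ Q * CT * E + Q * E * CT + Q * (CT * E + CT * E) := by
        refine add_le_add (add_le_add le_rfl ?_) ?_
        · exact mul_le_mul_of_nonneg_left hnhatN (mul_nonneg hQ0 hE0)
        · exact mul_le_mul_of_nonneg_left hdouble hQ0
    _ ≤ (4 * C + 6) * Q * CT * E := by nlinarith [mul_nonneg (mul_nonneg hQ0 (le_of_lt hCT)) hE0]
end

section
/- Let a mesh of ]0, x_max] be given that is quasi-uniform with constant C ≥ 1, with indices α_{i,k} as defined. Assume 0 ≤ β(x_j, x_k) ≤ Q and 0 ≤ b(x_j, x_k) S(x_k) ≤ Q₁ for all cell centers. Let C_T > 0, and define J(n) ∈ ℝ^I by J_i(n) = −(ΔJ^{agg}_i(n) + ΔJ^{brk}_i(n)), where ΔJ^{agg}_i(n) = (J^{agg}_{i+1/2}(n) − J^{agg}_{i−1/2}(n))/(x_i Δx_i) and ΔJ^{brk}_i(n) = (J^{brk}_{i+1/2}(n) − J^{brk}_{i−1/2}(n))/(x_i Δx_i). Then for all componentwise nonnegative n, n̂ ∈ ℝ^I with Σ_i n_i Δx_i ≤ C_T and Σ_i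 n̂_i Δx_i ≤ C_T, one has ‖J(n) − J(n̂)‖ ≤ L ‖n − n̂‖ with L = (4C + 6) Q C_T + 2 Q₁ x_max, where ‖·‖ is the discrete L¹ norm. -/
/-- Numerical breakage flux `J^{brk}_{i+1/2}(n)`. -/
noncomputable def Jbrk (I : ℕ) (xh : ℕ → ℝ) (b : ℝ → ℝ → ℝ) (S : ℝ → ℝ)
    (n : ℕ → ℝ) (i : ℕ) : ℝ :=
  -∑ k ∈ Finset.Icc (i + 1) I, n k * S (meshC xh k) * meshW xh k *
      ∑ j ∈ Finset.Icc 1 i, meshC xh j * b (meshC xh j) (meshC xh k) * meshW xh j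

/-- Right-hand side `J_i(n) = −(ΔJ^{agg}_i(n) + ΔJ^{brk}_i(n))` of the semi-discrete scheme,
with `ΔJ_i(n) = (J_{i+1/2}(n) − J_{i−1/2}(n))/(x_i Δx_i)`. -/
noncomputable def Jrhs (I : ℕ) (xh : ℕ → ℝ) (a : ℕ → ℕ → ℕ) (β b : ℝ → ℝ → ℝ)
    (S : ℝ → ℝ) (n : ℕ → ℝ) (i : ℕ) : ℝ :=
  -((Jagg I xh a β n i - Jagg I xh a β n (i - 1)) / (meshC xh i * meshW xh i) +
    (Jbrk I xh b S n i - Jbrk I xh b S n (i - 1)) / (meshC xh i * meshW xh i))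

/-! Auxiliary definitions and lemmas -/

lemma swap_tri (I : ℕ) (f : ℕ → ℕ → ℝ) :
    ∑ i ∈ Finset.Icc 1 I, ∑ k ∈ Finset.Icc (i+1) I, f i k
      = ∑ k ∈ Finset.Icc 1 I, ∑ i ∈ Finset.Icc 1 (k-1), f i k := by
  have h1 : ∀ i, ∑ k ∈ Finset.Icc (i+1) I, f i k
      = ∑ k ∈ Finset.Icc 1 I, if i + 1 ≤ k then f i k else 0 := by
    intro i
    rw [← Finset.sum_filter]
    congr 1
    ext k
    simp only [Finset.mem_filter, Finset.mem_Icc]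
    omega
  simp_rw [h1]
  rw [Finset.sum_comm]
  refine Finset.sum_congr rfl fun k hk => ?_
  simp only [Finset.mem_Icc] at hk
  rw [← Finset.sum_filter]
  congr 1
  ext i
  simp only [Finset.mem_filter, Finset.mem_Icc]
  omega

lemma sumW (xh : ℕ → ℝ) (m : ℕ) : ∑ i ∈ Finset.Icc 1 m, meshW xh i = xh m - xh 0 := by
  induction m with
  | zero => simp
  | succ m ih =>
    rw [Finset.sum_Icc_succ_top (by omega), ih, meshW]
    simp only [Nat.add_sub_cancel]
    ring

noncomputable def gfun (xh : ℕ → ℝ) (j : ℕ) (t : ℝ) : ℝ := max 0 (min (meshW xh j) (xh j - t))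

noncomputable def Tfun (I : ℕ) (xh : ℕ → ℝ) (β : ℝ → ℝ → ℝ) (m : ℕ → ℝ) (k : ℕ) (t : ℝ) : ℝ :=
  ∑ j ∈ Finset.Icc 1 I, m j * β (meshC xh j) (meshC xh k) * gfun xh j t

lemma teleT (I : ℕ) (xh : ℕ → ℝ) (β : ℝ → ℝ → ℝ) (m : ℕ → ℝ) (k : ℕ) {M : ℕ} (hk : k ≤ M) :
    ∑ i ∈ Finset.Icc (k+1) M,
        (Tfun I xh β m k (xh (i-1) - meshC xh k) - Tfun I xh β m k (xh i - meshC xh k))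
      = Tfun I xh β m k (xh k - meshC xh k) - Tfun I xh β m k (xh M - meshC xh k) := by
  induction M, hk using Nat.le_induction with
  | base => rw [Finset.Icc_eq_empty (by omega)]; simp
  | succ M hM ih =>
    rw [Finset.sum_Icc_succ_top (by omega), ih]
    simp only [Nat.add_sub_cancel]
    ring

lemma Jagg_repr (I : ℕ) (xh : ℕ → ℝ)
    (hmono' : ∀ p q : ℕ, p ≤ q → q ≤ I → xh p ≤ xh q)
    (a : ℕ → ℕ → ℕ)
    (ha : ∀ i k, 1 ≤ k → k ≤ i → i ≤ I →
      1 ≤ a i k ∧ a i k ≤ I ∧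
        xh i - meshC xh k ∈ Set.Ioc (xh (a i k - 1)) (xh (a i k)))
    (β : ℝ → ℝ → ℝ) (m : ℕ → ℝ) (i : ℕ) (hiI : i ≤ I) :
    Jagg I xh a β m i = ∑ k ∈ Finset.Icc 1 i, meshC xh k * m k * meshW xh k *
      Tfun I xh β m k (xh i - meshC xh k) := by
  unfold Jagg
  refine Finset.sum_congr rfl fun k hk => ?_
  simp only [Finset.mem_Icc] at hk
  obtain ⟨hA1, hAI, ht1, ht2⟩ :
      1 ≤ a i k ∧ a i k ≤ I ∧ xh (a i k - 1) < xh i - meshC xh k ∧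
        xh i - meshC xh k ≤ xh (a i k) := by
    obtain ⟨h1, h2, h3⟩ := ha i k hk.1 hk.2 hiI
    exact ⟨h1, h2, h3.1, h3.2⟩
  congr 1
  set A := a i k with hA
  set t := xh i - meshC xh k with htdef
  have hsplit : Finset.Icc 1 I = Finset.Icc 1 A ∪ Finset.Icc (A+1) I := by
    ext j; simp only [Finset.mem_union, Finset.mem_Icc]; omega
  have hdisj : Disjoint (Finset.Icc 1 A) (Finset.Icc (A+1) I) := by
    rw [Finset.disjoint_left]; intro j hj hj'
    simp only [Finset.mem_Icc] at hj hj'; omega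
  rw [Tfun, hsplit, Finset.sum_union hdisj]
  have hA' : A = (A - 1) + 1 := by omega
  rw [hA', Finset.sum_Icc_succ_top (by omega), ← hA']
  have e1 : ∑ j ∈ Finset.Icc 1 (A-1), m j * β (meshC xh j) (meshC xh k) * gfun xh j t = 0 := by
    refine Finset.sum_eq_zero fun j hj => ?_
    simp only [Finset.mem_Icc] at hj
    have : xh j ≤ xh (A - 1) := hmono' j (A-1) hj.2 (by omega)
    have : gfun xh j t = 0 := by
      rw [gfun, max_eq_left]
      exact (min_le_right _ _).trans (by linarith)
    rw [this]; ring
  have e2 : gfun xh A t = xh A - t := by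
    rw [gfun, min_eq_right, max_eq_right]
    · linarith
    · rw [meshW]; linarith
  have e3 : ∀ j ∈ Finset.Icc (A+1) I, m j * β (meshC xh j) (meshC xh k) * gfun xh j t
      = m j * β (meshC xh j) (meshC xh k) * meshW xh j := by
    intro j hj
    simp only [Finset.mem_Icc] at hj
    have h1 : xh A ≤ xh (j - 1) := hmono' A (j-1) (by omega) (by omega)
    have h2 : xh (j-1) ≤ xh j := hmono' (j-1) j (by omega) hj.2
    have : gfun xh j t = meshW xh j := by
      rw [gfun, min_eq_left, max_eq_right]
      · rw [meshW]; linarith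
      · rw [meshW]; linarith
    rw [this]
  rw [e1, Finset.sum_congr rfl e3, e2]
  ring

lemma Jagg_diff (I : ℕ) (xh : ℕ → ℝ)
    (hmono' : ∀ p q : ℕ, p ≤ q → q ≤ I → xh p ≤ xh q)
    (a : ℕ → ℕ → ℕ)
    (ha : ∀ i k, 1 ≤ k → k ≤ i → i ≤ I →
      1 ≤ a i k ∧ a i k ≤ I ∧
        xh i - meshC xh k ∈ Set.Ioc (xh (a i k - 1)) (xh (a i k)))
    (β : ℝ → ℝ → ℝ) (m : ℕ → ℝ) (i : ℕ) (hi1 : 1 ≤ i) (hiI : i ≤ I) :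
    Jagg I xh a β m i - Jagg I xh a β m (i-1)
      = meshC xh i * m i * meshW xh i * Tfun I xh β m i (xh i - meshC xh i)
        - ∑ k ∈ Finset.Icc 1 (i-1), meshC xh k * m k * meshW xh k *
            (Tfun I xh β m k (xh (i-1) - meshC xh k) - Tfun I xh β m k (xh i - meshC xh k)) := by
  rw [Jagg_repr I xh hmono' a ha β m i hiI, Jagg_repr I xh hmono' a ha β m (i-1) (by omega)]
  obtain ⟨i', rfl⟩ : ∃ i', i = i' + 1 := ⟨i - 1, by omega⟩
  simp only [Nat.add_sub_cancel]
  rw [Finset.sum_Icc_succ_top (by omega)]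
  simp only [mul_sub, Finset.sum_sub_distrib]
  ring

lemma Jbrk_diff (I : ℕ) (xh : ℕ → ℝ) (b : ℝ → ℝ → ℝ) (S : ℝ → ℝ)
    (m : ℕ → ℝ) (i : ℕ) (hi1 : 1 ≤ i) (hiI : i ≤ I) :
    Jbrk I xh b S m i - Jbrk I xh b S m (i-1)
      = -(∑ k ∈ Finset.Icc (i+1) I, m k * S (meshC xh k) * meshW xh k *
            (meshC xh i * b (meshC xh i) (meshC xh k) * meshW xh i))
        + m i * S (meshC xh i) * meshW xh i *
            ∑ j ∈ Finset.Icc 1 (i-1), meshC xh j * b (meshC xh j) (meshC xh i) * meshW xh j := by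
  obtain ⟨i', rfl⟩ : ∃ i', i = i' + 1 := ⟨i - 1, by omega⟩
  simp only [Nat.add_sub_cancel]
  unfold Jbrk
  rw [show Finset.Icc (i'+1) I = insert (i'+1) (Finset.Icc (i'+2) I) from by
    ext k; simp only [Finset.mem_insert, Finset.mem_Icc]; omega]
  rw [Finset.sum_insert (by simp only [Finset.mem_Icc]; omega)]
  simp only [Finset.sum_Icc_succ_top (Nat.le_add_left 1 i'), mul_add, Finset.sum_add_distrib]
  ring

/-- Lemma 3.5: on a quasi-uniform mesh with constant `C`, with `0 ≤ β ≤ Q` and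
`0 ≤ b·S ≤ Q₁` on the cell centers, the right-hand side of the semi-discrete combined
aggregation–breakage scheme is Lipschitz in the discrete L¹ norm with constant
`L = (4C + 6) Q C_T + 2 Q₁ x_max` on nonnegative vectors with total number of particles
bounded by `C_T`. -/
theorem stmt7 (I : ℕ) (xmax C Q Q1 CT : ℝ) (hI : 1 ≤ I) (hC : 1 ≤ C) (hCT : 0 < CT)
    (xh : ℕ → ℝ) (h0 : xh 0 = 0) (hImax : xh I = xmax)
    (hmono : ∀ m, m < I → xh m < xh (m + 1))
    (hqu : ∀ m ∈ Finset.Icc 1 I, ∀ l ∈ Finset.Icc 1 I, meshW xh m ≤ C * meshW xh l)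
    (a : ℕ → ℕ → ℕ)
    (ha : ∀ i k, 1 ≤ k → k ≤ i → i ≤ I →
      1 ≤ a i k ∧ a i k ≤ I ∧
        xh i - meshC xh k ∈ Set.Ioc (xh (a i k - 1)) (xh (a i k)))
    (β b : ℝ → ℝ → ℝ) (S : ℝ → ℝ)
    (hβ : ∀ j ∈ Finset.Icc 1 I, ∀ k ∈ Finset.Icc 1 I,
      0 ≤ β (meshC xh j) (meshC xh k) ∧ β (meshC xh j) (meshC xh k) ≤ Q)
    (hbS : ∀ j ∈ Finset.Icc 1 I, ∀ k ∈ Finset.Icc 1 I,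
      0 ≤ b (meshC xh j) (meshC xh k) * S (meshC xh k) ∧
        b (meshC xh j) (meshC xh k) * S (meshC xh k) ≤ Q1) :
    ∀ n nhat : ℕ → ℝ, (∀ i ∈ Finset.Icc 1 I, 0 ≤ n i) →
      (∀ i ∈ Finset.Icc 1 I, 0 ≤ nhat i) →
      (∑ i ∈ Finset.Icc 1 I, n i * meshW xh i) ≤ CT →
      (∑ i ∈ Finset.Icc 1 I, nhat i * meshW xh i) ≤ CT →
      (∑ i ∈ Finset.Icc 1 I,
          meshW xh i * |Jrhs I xh a β b S n i - Jrhs I xh a β b S nhat i|) ≤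
        ((4 * C + 6) * Q * CT + 2 * Q1 * xmax) *
          ∑ i ∈ Finset.Icc 1 I, meshW xh i * |n i - nhat i| := by
  intro n nhat hn hnhat hTn hTnhat
  have h1I : (1:ℕ) ∈ Finset.Icc 1 I := Finset.mem_Icc.mpr ⟨le_refl 1, hI⟩
  have hQ : 0 ≤ Q := le_trans (hβ 1 h1I 1 h1I).1 (hβ 1 h1I 1 h1I).2
  have hQ1 : 0 ≤ Q1 := le_trans (hbS 1 h1I 1 h1I).1 (hbS 1 h1I 1 h1I).2
  have hmono' : ∀ p q : ℕ, p ≤ q → q ≤ I → xh p ≤ xh q := by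
    have key : ∀ q, q ≤ I → ∀ p, p ≤ q → xh p ≤ xh q := by
      intro q
      induction q with
      | zero =>
        intro _ p hp
        have hp0 : p = 0 := by omega
        exact le_of_eq (congrArg xh hp0)
      | succ q ih =>
        intro hqI p hp
        rcases Nat.lt_or_ge p (q+1) with h | h
        · exact le_trans (ih (by omega) p (by omega)) (le_of_lt (hmono q (by omega)))
        · have : p = q+1 := by omega
          rw [this]
    exact fun p q hpq hqI => key q hqI p hpq
  have hW0 : ∀ i, 1 ≤ i → i ≤ I → 0 < meshW xh i := by
    intro i h1 h2
    have h := hmono (i-1) (by omega)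
    rw [show i - 1 + 1 = i by omega] at h
    rw [meshW]; linarith
  have hxhnn : ∀ q, q ≤ I → 0 ≤ xh q := by
    intro q hq; rw [← h0]; exact hmono' 0 q (Nat.zero_le q) hq
  have hc0 : ∀ i, 1 ≤ i → i ≤ I → 0 < meshC xh i := by
    intro i h1 h2
    have hw := hW0 i h1 h2
    have h3 := hxhnn (i-1) (by omega)
    rw [meshW] at hw
    rw [meshC]; linarith
  have hcmono : ∀ k i, 1 ≤ k → k ≤ i → i ≤ I → meshC xh k ≤ meshC xh i := by
    intro k i h1 h2 h3
    have hA := hmono' (k-1) (i-1) (by omega) (by omega)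
    have hB := hmono' k i h2 h3
    rw [meshC, meshC]; linarith
  have hxmaxq : ∀ q, q ≤ I → xh q ≤ xmax := by
    intro q hq; rw [← hImax]; exact hmono' q I hq le_rfl
  have hxmax0 : 0 ≤ xmax := le_trans (hxhnn 0 (by omega)) (hxmaxq 0 (by omega))
  set N := ∑ i ∈ Finset.Icc 1 I, meshW xh i * |n i - nhat i| with hNdef
  have hN0 : 0 ≤ N := by
    rw [hNdef]
    exact Finset.sum_nonneg fun i hi => mul_nonneg
      (hW0 i (Finset.mem_Icc.mp hi).1 (Finset.mem_Icc.mp hi).2).le (abs_nonneg _)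
  -- g facts
  have hgnn : ∀ j (t : ℝ), (0:ℝ) ≤ gfun xh j t := fun j t => le_max_left 0 _
  have hgW : ∀ j, 1 ≤ j → j ≤ I → ∀ t : ℝ, gfun xh j t ≤ meshW xh j :=
    fun j h1 h2 t => max_le (hW0 j h1 h2).le (min_le_left _ _)
  have hgmono : ∀ j (t t' : ℝ), t ≤ t' → gfun xh j t' ≤ gfun xh j t :=
    fun j t t' h => max_le_max le_rfl (min_le_min le_rfl (by linarith))
  -- T facts
  have hT0 : ∀ (m : ℕ → ℝ), (∀ j ∈ Finset.Icc 1 I, 0 ≤ m j) → ∀ k ∈ Finset.Icc 1 I, ∀ t : ℝ,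
      0 ≤ Tfun I xh β m k t := by
    intro m hm k hk t
    exact Finset.sum_nonneg fun j hj =>
      mul_nonneg (mul_nonneg (hm j hj) (hβ j hj k hk).1) (hgnn j t)
  have hTle : ∀ (m : ℕ → ℝ), (∀ j ∈ Finset.Icc 1 I, 0 ≤ m j) → ∀ k ∈ Finset.Icc 1 I, ∀ t : ℝ,
      Tfun I xh β m k t ≤ Q * ∑ j ∈ Finset.Icc 1 I, m j * meshW xh j := by
    intro m hm k hk t
    rw [Tfun, Finset.mul_sum]
    refine Finset.sum_le_sum fun j hj => ?_
    obtain ⟨hj1, hj2⟩ := Finset.mem_Icc.mp hj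
    obtain ⟨hb0, hbQ⟩ := hβ j hj k hk
    have h1 := hgnn j t
    have h2 := hgW j hj1 hj2 t
    have h3 := hm j hj
    have h4 := (hW0 j hj1 hj2).le
    calc m j * β (meshC xh j) (meshC xh k) * gfun xh j t
        ≤ m j * β (meshC xh j) (meshC xh k) * meshW xh j :=
          mul_le_mul_of_nonneg_left h2 (mul_nonneg h3 hb0)
      _ ≤ m j * Q * meshW xh j :=
          mul_le_mul_of_nonneg_right (mul_le_mul_of_nonneg_left hbQ h3) h4
      _ = Q * (m j * meshW xh j) := by ring
  have hTmono : ∀ (m : ℕ → ℝ), (∀ j ∈ Finset.Icc 1 I, 0 ≤ m j) → ∀ k ∈ Finset.Icc 1 I,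
      ∀ t t' : ℝ, t ≤ t' → Tfun I xh β m k t' ≤ Tfun I xh β m k t := by
    intro m hm k hk t t' h
    refine Finset.sum_le_sum fun j hj => ?_
    exact mul_le_mul_of_nonneg_left (hgmono j t t' h) (mul_nonneg (hm j hj) (hβ j hj k hk).1)
  have hTlin : ∀ (k : ℕ) (t : ℝ), Tfun I xh β n k t - Tfun I xh β nhat k t
      = Tfun I xh β (fun j => n j - nhat j) k t := by
    intro k t
    rw [Tfun, Tfun, Tfun, ← Finset.sum_sub_distrib]
    exact Finset.sum_congr rfl fun j _ => by ring
  have hTabs : ∀ k ∈ Finset.Icc 1 I, ∀ t : ℝ,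
      |Tfun I xh β (fun j => n j - nhat j) k t| ≤ Q * N := by
    intro k hk t
    refine le_trans (Finset.abs_sum_le_sum_abs _ _) ?_
    rw [hNdef, Finset.mul_sum]
    refine Finset.sum_le_sum fun j hj => ?_
    obtain ⟨hj1, hj2⟩ := Finset.mem_Icc.mp hj
    obtain ⟨hb0, hbQ⟩ := hβ j hj k hk
    have h1 := hgnn j t
    have h2 := hgW j hj1 hj2 t
    have h4 := (hW0 j hj1 hj2).le
    rw [abs_mul, abs_mul, abs_of_nonneg hb0, abs_of_nonneg h1]
    calc |(fun j => n j - nhat j) j| * β (meshC xh j) (meshC xh k) * gfun xh j t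
        = |n j - nhat j| * β (meshC xh j) (meshC xh k) * gfun xh j t := rfl
      _ ≤ |n j - nhat j| * β (meshC xh j) (meshC xh k) * meshW xh j :=
          mul_le_mul_of_nonneg_left h2 (mul_nonneg (abs_nonneg _) hb0)
      _ ≤ |n j - nhat j| * Q * meshW xh j :=
          mul_le_mul_of_nonneg_right (mul_le_mul_of_nonneg_left hbQ (abs_nonneg _)) h4
      _ = Q * (meshW xh j * |n j - nhat j|) := by ring
  have hDabs : ∀ k ∈ Finset.Icc 1 I, ∀ t t' : ℝ, t ≤ t' →
      |Tfun I xh β (fun j => n j - nhat j) k t - Tfun I xh β (fun j => n j - nhat j) k t'|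
        ≤ Tfun I xh β (fun j => |n j - nhat j|) k t - Tfun I xh β (fun j => |n j - nhat j|) k t' := by
    intro k hk t t' h
    rw [Tfun, Tfun, Tfun, Tfun, ← Finset.sum_sub_distrib, ← Finset.sum_sub_distrib]
    refine le_trans (Finset.abs_sum_le_sum_abs _ _) (Finset.sum_le_sum fun j hj => ?_)
    obtain ⟨hb0, hbQ⟩ := hβ j hj k hk
    have hgg := hgmono j t t' h
    rw [show (n j - nhat j) * β (meshC xh j) (meshC xh k) * gfun xh j t
        - (n j - nhat j) * β (meshC xh j) (meshC xh k) * gfun xh j t'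
        = (n j - nhat j) * (β (meshC xh j) (meshC xh k) * (gfun xh j t - gfun xh j t')) from by ring]
    rw [abs_mul, abs_of_nonneg (mul_nonneg hb0 (by linarith))]
    calc |n j - nhat j| * (β (meshC xh j) (meshC xh k) * (gfun xh j t - gfun xh j t'))
        = |n j - nhat j| * β (meshC xh j) (meshC xh k) * gfun xh j t
          - |n j - nhat j| * β (meshC xh j) (meshC xh k) * gfun xh j t' := by ring
      _ = |(fun j => |n j - nhat j|) j| * β (meshC xh j) (meshC xh k) * gfun xh j t
          - |(fun j => |n j - nhat j|) j| * β (meshC xh j) (meshC xh k) * gfun xh j t' := by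
            rw [show |(fun j => |n j - nhat j|) j| = |n j - nhat j| from abs_abs _]
      _ ≤ (fun j => |n j - nhat j|) j * β (meshC xh j) (meshC xh k) * gfun xh j t
          - (fun j => |n j - nhat j|) j * β (meshC xh j) (meshC xh k) * gfun xh j t' := by
            rw [show |(fun j => |n j - nhat j|) j| = (fun j => |n j - nhat j|) j from abs_abs _]
  -- the semidiscrete differences
  set Ag : ℕ → ℝ := fun i => (Jagg I xh a β n i - Jagg I xh a β n (i-1))
      - (Jagg I xh a β nhat i - Jagg I xh a β nhat (i-1)) with hAgdef
  set Bk : ℕ → ℝ := fun i => (Jbrk I xh b S n i - Jbrk I xh b S n (i-1))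
      - (Jbrk I xh b S nhat i - Jbrk I xh b S nhat (i-1)) with hBkdef
  have key : ∀ i ∈ Finset.Icc 1 I,
      meshW xh i * |Jrhs I xh a β b S n i - Jrhs I xh a β b S nhat i|
        ≤ |Ag i| / meshC xh i + |Bk i| / meshC xh i := by
    intro i hi
    obtain ⟨h1, h2⟩ := Finset.mem_Icc.mp hi
    have hc := hc0 i h1 h2
    have hw := hW0 i h1 h2
    have hcw : meshC xh i * meshW xh i ≠ 0 := ne_of_gt (mul_pos hc hw)
    have e : Jrhs I xh a β b S n i - Jrhs I xh a β b S nhat i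
        = -((Ag i + Bk i) / (meshC xh i * meshW xh i)) := by
      simp only [hAgdef, hBkdef, Jrhs]
      field_simp
      ring
    rw [e, abs_neg, abs_div, abs_of_pos (mul_pos hc hw)]
    rw [show meshW xh i * (|Ag i + Bk i| / (meshC xh i * meshW xh i))
        = |Ag i + Bk i| / meshC xh i from by field_simp]
    rw [← add_div]
    exact (div_le_div_iff_of_pos_right hc).mpr (abs_add_le _ _)
  -- breakage per-index bound
  have brkBound : ∀ i ∈ Finset.Icc 1 I,
      |Bk i| / meshC xh i ≤
        (∑ k ∈ Finset.Icc (i+1) I, Q1 * (meshW xh i * (meshW xh k * |n k - nhat k|)))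
          + Q1 * xmax * (meshW xh i * |n i - nhat i|) := by
    intro i hi
    obtain ⟨h1, h2⟩ := Finset.mem_Icc.mp hi
    have hc := hc0 i h1 h2
    have hw := hW0 i h1 h2
    rw [div_le_iff₀ hc]
    have e : Bk i = -(∑ k ∈ Finset.Icc (i+1) I, (n k - nhat k) * S (meshC xh k) * meshW xh k *
            (meshC xh i * b (meshC xh i) (meshC xh k) * meshW xh i))
          + (n i - nhat i) * S (meshC xh i) * meshW xh i *
            ∑ j ∈ Finset.Icc 1 (i-1), meshC xh j * b (meshC xh j) (meshC xh i) * meshW xh j := by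
      simp only [hBkdef]
      rw [Jbrk_diff I xh b S n i h1 h2, Jbrk_diff I xh b S nhat i h1 h2]
      rw [show ∑ k ∈ Finset.Icc (i+1) I, (n k - nhat k) * S (meshC xh k) * meshW xh k *
            (meshC xh i * b (meshC xh i) (meshC xh k) * meshW xh i)
          = (∑ k ∈ Finset.Icc (i+1) I, n k * S (meshC xh k) * meshW xh k *
              (meshC xh i * b (meshC xh i) (meshC xh k) * meshW xh i))
            - ∑ k ∈ Finset.Icc (i+1) I, nhat k * S (meshC xh k) * meshW xh k *
              (meshC xh i * b (meshC xh i) (meshC xh k) * meshW xh i) from by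
        rw [← Finset.sum_sub_distrib]
        exact Finset.sum_congr rfl fun k _ => by ring]
      ring
    have part1 : |∑ k ∈ Finset.Icc (i+1) I, (n k - nhat k) * S (meshC xh k) * meshW xh k *
            (meshC xh i * b (meshC xh i) (meshC xh k) * meshW xh i)|
        ≤ (∑ k ∈ Finset.Icc (i+1) I, Q1 * (meshW xh i * (meshW xh k * |n k - nhat k|)))
            * meshC xh i := by
      refine le_trans (Finset.abs_sum_le_sum_abs _ _) ?_
      rw [Finset.sum_mul]
      refine Finset.sum_le_sum fun k hk => ?_
      obtain ⟨hk1, hk2⟩ := Finset.mem_Icc.mp hk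
      have hkI : k ∈ Finset.Icc 1 I := Finset.mem_Icc.mpr ⟨by omega, hk2⟩
      obtain ⟨hbs0, hbsQ⟩ := hbS i hi k hkI
      have hwk := (hW0 k (by omega) hk2).le
      have hz : (0:ℝ) ≤ meshW xh k * meshC xh i * meshW xh i :=
        mul_nonneg (mul_nonneg hwk hc.le) hw.le
      rw [show (n k - nhat k) * S (meshC xh k) * meshW xh k *
            (meshC xh i * b (meshC xh i) (meshC xh k) * meshW xh i)
          = ((n k - nhat k) * (b (meshC xh i) (meshC xh k) * S (meshC xh k)))
              * (meshW xh k * meshC xh i * meshW xh i) from by ring]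
      rw [abs_mul, abs_mul, abs_of_nonneg hbs0, abs_of_nonneg hz]
      calc |n k - nhat k| * (b (meshC xh i) (meshC xh k) * S (meshC xh k))
              * (meshW xh k * meshC xh i * meshW xh i)
          ≤ |n k - nhat k| * Q1 * (meshW xh k * meshC xh i * meshW xh i) :=
            mul_le_mul_of_nonneg_right
              (mul_le_mul_of_nonneg_left hbsQ (abs_nonneg _)) hz
        _ = Q1 * (meshW xh i * (meshW xh k * |n k - nhat k|)) * meshC xh i := by ring
    have part2 : |(n i - nhat i) * S (meshC xh i) * meshW xh i *
            ∑ j ∈ Finset.Icc 1 (i-1), meshC xh j * b (meshC xh j) (meshC xh i) * meshW xh j|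
        ≤ Q1 * xmax * (meshW xh i * |n i - nhat i|) * meshC xh i := by
      have hP1 : S (meshC xh i) * ∑ j ∈ Finset.Icc 1 (i-1),
            meshC xh j * b (meshC xh j) (meshC xh i) * meshW xh j
          = ∑ j ∈ Finset.Icc 1 (i-1),
              meshC xh j * (b (meshC xh j) (meshC xh i) * S (meshC xh i)) * meshW xh j := by
        rw [Finset.mul_sum]
        exact Finset.sum_congr rfl fun j _ => by ring
      have hjmem : ∀ j ∈ Finset.Icc 1 (i-1), j ∈ Finset.Icc 1 I := by
        intro j hj
        obtain ⟨hj1, hj2⟩ := Finset.mem_Icc.mp hj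
        exact Finset.mem_Icc.mpr ⟨hj1, by omega⟩
      have hP2 : 0 ≤ ∑ j ∈ Finset.Icc 1 (i-1),
          meshC xh j * (b (meshC xh j) (meshC xh i) * S (meshC xh i)) * meshW xh j := by
        refine Finset.sum_nonneg fun j hj => ?_
        obtain ⟨hj1, hj2⟩ := Finset.mem_Icc.mp hj
        exact mul_nonneg (mul_nonneg (hc0 j hj1 (by omega)).le
          (hbS j (hjmem j hj) i hi).1) (hW0 j hj1 (by omega)).le
      have hP3 : ∑ j ∈ Finset.Icc 1 (i-1),
            meshC xh j * (b (meshC xh j) (meshC xh i) * S (meshC xh i)) * meshW xh j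
          ≤ Q1 * (meshC xh i * xmax) := by
        calc ∑ j ∈ Finset.Icc 1 (i-1),
              meshC xh j * (b (meshC xh j) (meshC xh i) * S (meshC xh i)) * meshW xh j
            ≤ ∑ j ∈ Finset.Icc 1 (i-1), meshC xh i * Q1 * meshW xh j := by
              refine Finset.sum_le_sum fun j hj => ?_
              obtain ⟨hj1, hj2⟩ := Finset.mem_Icc.mp hj
              refine mul_le_mul_of_nonneg_right
                (mul_le_mul (hcmono j i hj1 (by omega) h2) (hbS j (hjmem j hj) i hi).2
                  (hbS j (hjmem j hj) i hi).1 hc.le) (hW0 j hj1 (by omega)).le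
          _ = meshC xh i * Q1 * (xh (i-1) - xh 0) := by
              rw [← Finset.mul_sum, sumW]
          _ ≤ Q1 * (meshC xh i * xmax) := by
              rw [h0]
              have := hxmaxq (i-1) (by omega)
              nlinarith [mul_nonneg hc.le hQ1]
      rw [show (n i - nhat i) * S (meshC xh i) * meshW xh i *
            ∑ j ∈ Finset.Icc 1 (i-1), meshC xh j * b (meshC xh j) (meshC xh i) * meshW xh j
          = (n i - nhat i) * meshW xh i * (S (meshC xh i) *
              ∑ j ∈ Finset.Icc 1 (i-1), meshC xh j * b (meshC xh j) (meshC xh i) * meshW xh j)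
            from by ring]
      rw [abs_mul, abs_mul, abs_of_nonneg hw.le, abs_of_nonneg (le_of_le_of_eq hP2 hP1.symm)]
      calc |n i - nhat i| * meshW xh i * (S (meshC xh i) *
              ∑ j ∈ Finset.Icc 1 (i-1), meshC xh j * b (meshC xh j) (meshC xh i) * meshW xh j)
          ≤ |n i - nhat i| * meshW xh i * (Q1 * (meshC xh i * xmax)) := by
            refine mul_le_mul_of_nonneg_left ?_ (mul_nonneg (abs_nonneg _) hw.le)
            rw [hP1]
            exact hP3
        _ = Q1 * xmax * (meshW xh i * |n i - nhat i|) * meshC xh i := by ring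
    calc |Bk i| ≤ |∑ k ∈ Finset.Icc (i+1) I, (n k - nhat k) * S (meshC xh k) * meshW xh k *
            (meshC xh i * b (meshC xh i) (meshC xh k) * meshW xh i)|
          + |(n i - nhat i) * S (meshC xh i) * meshW xh i *
            ∑ j ∈ Finset.Icc 1 (i-1), meshC xh j * b (meshC xh j) (meshC xh i) * meshW xh j| := by
          rw [e]
          exact (abs_add_le _ _).trans (le_of_eq (by rw [abs_neg]))
      _ ≤ (∑ k ∈ Finset.Icc (i+1) I, Q1 * (meshW xh i * (meshW xh k * |n k - nhat k|)))
            * meshC xh i + Q1 * xmax * (meshW xh i * |n i - nhat i|) * meshC xh i :=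
          add_le_add part1 part2
      _ = ((∑ k ∈ Finset.Icc (i+1) I, Q1 * (meshW xh i * (meshW xh k * |n k - nhat k|)))
            + Q1 * xmax * (meshW xh i * |n i - nhat i|)) * meshC xh i := by ring
  have brkTotal : ∑ i ∈ Finset.Icc 1 I, |Bk i| / meshC xh i ≤ Q1 * xmax * N + Q1 * xmax * N := by
    refine le_trans (Finset.sum_le_sum brkBound) ?_
    rw [Finset.sum_add_distrib]
    have hA : ∑ i ∈ Finset.Icc 1 I, ∑ k ∈ Finset.Icc (i+1) I,
        Q1 * (meshW xh i * (meshW xh k * |n k - nhat k|)) ≤ Q1 * xmax * N := by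
      rw [swap_tri I (fun i k => Q1 * (meshW xh i * (meshW xh k * |n k - nhat k|)))]
      have step : ∀ k ∈ Finset.Icc 1 I, ∑ i ∈ Finset.Icc 1 (k-1),
          Q1 * (meshW xh i * (meshW xh k * |n k - nhat k|))
            ≤ Q1 * xmax * (meshW xh k * |n k - nhat k|) := by
        intro k hk
        obtain ⟨hk1, hk2⟩ := Finset.mem_Icc.mp hk
        have e : ∑ i ∈ Finset.Icc 1 (k-1), Q1 * (meshW xh i * (meshW xh k * |n k - nhat k|))
            = Q1 * ((xh (k-1) - xh 0) * (meshW xh k * |n k - nhat k|)) := by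
          rw [← sumW xh (k-1), Finset.sum_mul, Finset.mul_sum]
        rw [e, h0]
        have h1 := hxmaxq (k-1) (by omega)
        have h2 : (0:ℝ) ≤ meshW xh k * |n k - nhat k| :=
          mul_nonneg (hW0 k hk1 hk2).le (abs_nonneg _)
        nlinarith [mul_nonneg hQ1 h2]
      calc ∑ k ∈ Finset.Icc 1 I, ∑ i ∈ Finset.Icc 1 (k-1),
            Q1 * (meshW xh i * (meshW xh k * |n k - nhat k|))
          ≤ ∑ k ∈ Finset.Icc 1 I, Q1 * xmax * (meshW xh k * |n k - nhat k|) :=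
            Finset.sum_le_sum step
        _ = Q1 * xmax * N := by rw [hNdef, Finset.mul_sum]
    have hB : ∑ i ∈ Finset.Icc 1 I, Q1 * xmax * (meshW xh i * |n i - nhat i|)
        = Q1 * xmax * N := by rw [hNdef, Finset.mul_sum]
    linarith [hA, hB.le, hB.ge]
  have habs0 : ∀ x y : ℝ, |x - y| ≤ |x| + |y| := fun x y => by
    rw [sub_eq_add_neg]
    exact (abs_add_le _ _).trans (le_of_eq (by rw [abs_neg]))
  -- aggregation per-index bound
  have aggBound : ∀ i ∈ Finset.Icc 1 I,
      |Ag i| / meshC xh i ≤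
        meshW xh i * |n i - nhat i| * (Q * CT) + meshW xh i * nhat i * (Q * N)
          + ∑ k ∈ Finset.Icc 1 (i-1),
              (meshW xh k * |n k - nhat k| *
                  (Tfun I xh β n k (xh (i-1) - meshC xh k) - Tfun I xh β n k (xh i - meshC xh k))
                + meshW xh k * nhat k *
                  (Tfun I xh β (fun j => |n j - nhat j|) k (xh (i-1) - meshC xh k)
                    - Tfun I xh β (fun j => |n j - nhat j|) k (xh i - meshC xh k))) := by
    intro i hi
    obtain ⟨h1, h2⟩ := Finset.mem_Icc.mp hi
    have hc := hc0 i h1 h2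
    have hw := hW0 i h1 h2
    rw [div_le_iff₀ hc]
    have eS : ∑ k ∈ Finset.Icc 1 (i-1), meshC xh k * meshW xh k *
          (n k * (Tfun I xh β n k (xh (i-1) - meshC xh k) - Tfun I xh β n k (xh i - meshC xh k))
            - nhat k * (Tfun I xh β nhat k (xh (i-1) - meshC xh k)
                - Tfun I xh β nhat k (xh i - meshC xh k)))
        = (∑ k ∈ Finset.Icc 1 (i-1), meshC xh k * n k * meshW xh k *
            (Tfun I xh β n k (xh (i-1) - meshC xh k) - Tfun I xh β n k (xh i - meshC xh k)))
          - ∑ k ∈ Finset.Icc 1 (i-1), meshC xh k * nhat k * meshW xh k *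
            (Tfun I xh β nhat k (xh (i-1) - meshC xh k)
              - Tfun I xh β nhat k (xh i - meshC xh k)) := by
      rw [← Finset.sum_sub_distrib]
      exact Finset.sum_congr rfl fun k _ => by ring
    have e : Ag i = meshC xh i * meshW xh i *
          (n i * Tfun I xh β n i (xh i - meshC xh i)
            - nhat i * Tfun I xh β nhat i (xh i - meshC xh i))
        - ∑ k ∈ Finset.Icc 1 (i-1), meshC xh k * meshW xh k *
            (n k * (Tfun I xh β n k (xh (i-1) - meshC xh k) - Tfun I xh β n k (xh i - meshC xh k))
              - nhat k * (Tfun I xh β nhat k (xh (i-1) - meshC xh k)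
                  - Tfun I xh β nhat k (xh i - meshC xh k))) := by
      simp only [hAgdef]
      rw [Jagg_diff I xh hmono' a ha β n i h1 h2, Jagg_diff I xh hmono' a ha β nhat i h1 h2, eS]
      ring
    have topstep : |n i * Tfun I xh β n i (xh i - meshC xh i)
          - nhat i * Tfun I xh β nhat i (xh i - meshC xh i)|
        ≤ |n i - nhat i| * (Q * CT) + nhat i * (Q * N) := by
      have eT : n i * Tfun I xh β n i (xh i - meshC xh i)
            - nhat i * Tfun I xh β nhat i (xh i - meshC xh i)
          = (n i - nhat i) * Tfun I xh β n i (xh i - meshC xh i)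
            + nhat i * Tfun I xh β (fun j => n j - nhat j) i (xh i - meshC xh i) := by
        rw [← hTlin i (xh i - meshC xh i)]; ring
      rw [eT]
      refine (abs_add_le _ _).trans ?_
      rw [abs_mul, abs_mul, abs_of_nonneg (hnhat i hi)]
      refine add_le_add (mul_le_mul_of_nonneg_left ?_ (abs_nonneg _))
        (mul_le_mul_of_nonneg_left (hTabs i hi _) (hnhat i hi))
      rw [abs_of_nonneg (hT0 n hn i hi _)]
      exact (hTle n hn i hi _).trans (mul_le_mul_of_nonneg_left hTn hQ)
    have kstep : ∀ k ∈ Finset.Icc 1 (i-1),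
        meshC xh k * meshW xh k *
            |n k * (Tfun I xh β n k (xh (i-1) - meshC xh k) - Tfun I xh β n k (xh i - meshC xh k))
              - nhat k * (Tfun I xh β nhat k (xh (i-1) - meshC xh k)
                  - Tfun I xh β nhat k (xh i - meshC xh k))|
          ≤ meshC xh i * (meshW xh k * |n k - nhat k| *
                (Tfun I xh β n k (xh (i-1) - meshC xh k) - Tfun I xh β n k (xh i - meshC xh k))
              + meshW xh k * nhat k *
                (Tfun I xh β (fun j => |n j - nhat j|) k (xh (i-1) - meshC xh k)
                  - Tfun I xh β (fun j => |n j - nhat j|) k (xh i - meshC xh k))) := by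
      intro k hk
      obtain ⟨hk1, hk2⟩ := Finset.mem_Icc.mp hk
      have hkI : k ∈ Finset.Icc 1 I := Finset.mem_Icc.mpr ⟨hk1, by omega⟩
      have hck := hc0 k hk1 (by omega)
      have hwk := hW0 k hk1 (by omega)
      have htt : xh (i-1) - meshC xh k ≤ xh i - meshC xh k := by
        have := hmono' (i-1) i (by omega) h2
        linarith
      have hDn0 : 0 ≤ Tfun I xh β n k (xh (i-1) - meshC xh k)
          - Tfun I xh β n k (xh i - meshC xh k) :=
        sub_nonneg.mpr (hTmono n hn k hkI _ _ htt)
      have hDA0 : 0 ≤ Tfun I xh β (fun j => |n j - nhat j|) k (xh (i-1) - meshC xh k)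
          - Tfun I xh β (fun j => |n j - nhat j|) k (xh i - meshC xh k) :=
        sub_nonneg.mpr (hTmono (fun j => |n j - nhat j|) (fun j _ => abs_nonneg _) k hkI _ _ htt)
      have core : |n k * (Tfun I xh β n k (xh (i-1) - meshC xh k)
              - Tfun I xh β n k (xh i - meshC xh k))
            - nhat k * (Tfun I xh β nhat k (xh (i-1) - meshC xh k)
                - Tfun I xh β nhat k (xh i - meshC xh k))|
          ≤ |n k - nhat k| * (Tfun I xh β n k (xh (i-1) - meshC xh k)
                - Tfun I xh β n k (xh i - meshC xh k))
            + nhat k * (Tfun I xh β (fun j => |n j - nhat j|) k (xh (i-1) - meshC xh k)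
                - Tfun I xh β (fun j => |n j - nhat j|) k (xh i - meshC xh k)) := by
        have eD : n k * (Tfun I xh β n k (xh (i-1) - meshC xh k)
              - Tfun I xh β n k (xh i - meshC xh k))
            - nhat k * (Tfun I xh β nhat k (xh (i-1) - meshC xh k)
                - Tfun I xh β nhat k (xh i - meshC xh k))
            = (n k - nhat k) * (Tfun I xh β n k (xh (i-1) - meshC xh k)
                - Tfun I xh β n k (xh i - meshC xh k))
              + nhat k * (Tfun I xh β (fun j => n j - nhat j) k (xh (i-1) - meshC xh k)
                  - Tfun I xh β (fun j => n j - nhat j) k (xh i - meshC xh k)) := by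
          rw [← hTlin k (xh (i-1) - meshC xh k), ← hTlin k (xh i - meshC xh k)]
          ring
        rw [eD]
        refine (abs_add_le _ _).trans ?_
        rw [abs_mul, abs_mul, abs_of_nonneg (hnhat k hkI), abs_of_nonneg hDn0]
        exact add_le_add le_rfl
          (mul_le_mul_of_nonneg_left (hDabs k hkI _ _ htt) (hnhat k hkI))
      calc meshC xh k * meshW xh k *
            |n k * (Tfun I xh β n k (xh (i-1) - meshC xh k) - Tfun I xh β n k (xh i - meshC xh k))
              - nhat k * (Tfun I xh β nhat k (xh (i-1) - meshC xh k)
                  - Tfun I xh β nhat k (xh i - meshC xh k))|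
          ≤ meshC xh k * meshW xh k *
              (|n k - nhat k| * (Tfun I xh β n k (xh (i-1) - meshC xh k)
                  - Tfun I xh β n k (xh i - meshC xh k))
                + nhat k * (Tfun I xh β (fun j => |n j - nhat j|) k (xh (i-1) - meshC xh k)
                    - Tfun I xh β (fun j => |n j - nhat j|) k (xh i - meshC xh k))) :=
            mul_le_mul_of_nonneg_left core (mul_nonneg hck.le hwk.le)
        _ ≤ meshC xh i * (meshW xh k *
              (|n k - nhat k| * (Tfun I xh β n k (xh (i-1) - meshC xh k)
                  - Tfun I xh β n k (xh i - meshC xh k))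
                + nhat k * (Tfun I xh β (fun j => |n j - nhat j|) k (xh (i-1) - meshC xh k)
                    - Tfun I xh β (fun j => |n j - nhat j|) k (xh i - meshC xh k)))) := by
            rw [mul_assoc]
            exact mul_le_mul_of_nonneg_right (hcmono k i hk1 (by omega) h2)
              (mul_nonneg hwk.le (add_nonneg (mul_nonneg (abs_nonneg _) hDn0)
                (mul_nonneg (hnhat k hkI) hDA0)))
        _ = meshC xh i * (meshW xh k * |n k - nhat k| *
                (Tfun I xh β n k (xh (i-1) - meshC xh k) - Tfun I xh β n k (xh i - meshC xh k))
              + meshW xh k * nhat k *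
                (Tfun I xh β (fun j => |n j - nhat j|) k (xh (i-1) - meshC xh k)
                  - Tfun I xh β (fun j => |n j - nhat j|) k (xh i - meshC xh k))) := by ring
    calc |Ag i|
        ≤ |meshC xh i * meshW xh i *
              (n i * Tfun I xh β n i (xh i - meshC xh i)
                - nhat i * Tfun I xh β nhat i (xh i - meshC xh i))|
            + |∑ k ∈ Finset.Icc 1 (i-1), meshC xh k * meshW xh k *
                (n k * (Tfun I xh β n k (xh (i-1) - meshC xh k)
                    - Tfun I xh β n k (xh i - meshC xh k))
                  - nhat k * (Tfun I xh β nhat k (xh (i-1) - meshC xh k)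
                      - Tfun I xh β nhat k (xh i - meshC xh k)))| := by
          rw [e]
          exact habs0 _ _
      _ ≤ meshC xh i * meshW xh i *
              |n i * Tfun I xh β n i (xh i - meshC xh i)
                - nhat i * Tfun I xh β nhat i (xh i - meshC xh i)|
            + ∑ k ∈ Finset.Icc 1 (i-1), meshC xh k * meshW xh k *
                |n k * (Tfun I xh β n k (xh (i-1) - meshC xh k)
                    - Tfun I xh β n k (xh i - meshC xh k))
                  - nhat k * (Tfun I xh β nhat k (xh (i-1) - meshC xh k)
                      - Tfun I xh β nhat k (xh i - meshC xh k))| := by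
          refine add_le_add (le_of_eq ?_)
            (le_trans (Finset.abs_sum_le_sum_abs _ _) (Finset.sum_le_sum fun k hk => ?_))
          · rw [abs_mul, abs_of_nonneg (mul_nonneg hc.le hw.le)]
          · obtain ⟨hk1, hk2⟩ := Finset.mem_Icc.mp hk
            exact le_of_eq (by
              rw [abs_mul, abs_of_nonneg
                (mul_nonneg (hc0 k hk1 (by omega)).le (hW0 k hk1 (by omega)).le)])
      _ ≤ meshC xh i * meshW xh i * (|n i - nhat i| * (Q * CT) + nhat i * (Q * N))
            + ∑ k ∈ Finset.Icc 1 (i-1), meshC xh i * (meshW xh k * |n k - nhat k| *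
                (Tfun I xh β n k (xh (i-1) - meshC xh k) - Tfun I xh β n k (xh i - meshC xh k))
              + meshW xh k * nhat k *
                (Tfun I xh β (fun j => |n j - nhat j|) k (xh (i-1) - meshC xh k)
                  - Tfun I xh β (fun j => |n j - nhat j|) k (xh i - meshC xh k))) :=
          add_le_add (mul_le_mul_of_nonneg_left topstep (mul_nonneg hc.le hw.le))
            (Finset.sum_le_sum kstep)
      _ = (meshW xh i * |n i - nhat i| * (Q * CT) + meshW xh i * nhat i * (Q * N)
            + ∑ k ∈ Finset.Icc 1 (i-1),
                (meshW xh k * |n k - nhat k| *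
                    (Tfun I xh β n k (xh (i-1) - meshC xh k)
                      - Tfun I xh β n k (xh i - meshC xh k))
                  + meshW xh k * nhat k *
                    (Tfun I xh β (fun j => |n j - nhat j|) k (xh (i-1) - meshC xh k)
                      - Tfun I xh β (fun j => |n j - nhat j|) k (xh i - meshC xh k))))
            * meshC xh i := by
          rw [← Finset.mul_sum]
          ring
  have e1 : ∑ i ∈ Finset.Icc 1 I, meshW xh i * |n i - nhat i| * (Q * CT) = N * (Q * CT) := by
    rw [hNdef, Finset.sum_mul]
  have e2 : ∑ i ∈ Finset.Icc 1 I, meshW xh i * nhat i * (Q * N) ≤ CT * (Q * N) := by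
    rw [← Finset.sum_mul]
    refine mul_le_mul_of_nonneg_right ?_ (mul_nonneg hQ hN0)
    exact le_trans (le_of_eq (Finset.sum_congr rfl fun i _ => mul_comm _ _)) hTnhat
  have aggTotal : ∑ i ∈ Finset.Icc 1 I, |Ag i| / meshC xh i
      ≤ N * (Q * CT) + CT * (Q * N) + (N * (Q * CT) + CT * (Q * N)) := by
    refine le_trans (Finset.sum_le_sum aggBound) ?_
    rw [Finset.sum_add_distrib, Finset.sum_add_distrib]
    have e3 : ∑ i ∈ Finset.Icc 1 I, ∑ k ∈ Finset.Icc 1 (i-1),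
        (meshW xh k * |n k - nhat k| *
            (Tfun I xh β n k (xh (i-1) - meshC xh k) - Tfun I xh β n k (xh i - meshC xh k))
          + meshW xh k * nhat k *
            (Tfun I xh β (fun j => |n j - nhat j|) k (xh (i-1) - meshC xh k)
              - Tfun I xh β (fun j => |n j - nhat j|) k (xh i - meshC xh k)))
        ≤ N * (Q * CT) + CT * (Q * N) := by
      rw [← swap_tri I (fun p q =>
        meshW xh p * |n p - nhat p| *
            (Tfun I xh β n p (xh (q-1) - meshC xh p) - Tfun I xh β n p (xh q - meshC xh p))
          + meshW xh p * nhat p *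
            (Tfun I xh β (fun j => |n j - nhat j|) p (xh (q-1) - meshC xh p)
              - Tfun I xh β (fun j => |n j - nhat j|) p (xh q - meshC xh p)))]
      have inner : ∀ i ∈ Finset.Icc 1 I, ∑ k ∈ Finset.Icc (i+1) I,
          (meshW xh i * |n i - nhat i| *
              (Tfun I xh β n i (xh (k-1) - meshC xh i) - Tfun I xh β n i (xh k - meshC xh i))
            + meshW xh i * nhat i *
              (Tfun I xh β (fun j => |n j - nhat j|) i (xh (k-1) - meshC xh i)
                - Tfun I xh β (fun j => |n j - nhat j|) i (xh k - meshC xh i)))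
          ≤ meshW xh i * |n i - nhat i| * (Q * CT) + meshW xh i * nhat i * (Q * N) := by
        intro i hi
        obtain ⟨h1, h2⟩ := Finset.mem_Icc.mp hi
        have hw := hW0 i h1 h2
        rw [Finset.sum_add_distrib, ← Finset.mul_sum, ← Finset.mul_sum]
        have t1 : ∑ k ∈ Finset.Icc (i+1) I,
            (Tfun I xh β n i (xh (k-1) - meshC xh i) - Tfun I xh β n i (xh k - meshC xh i))
            ≤ Q * CT := by
          rw [teleT I xh β n i h2]
          have u1 := hTle n hn i hi (xh i - meshC xh i)
          have u2 := hT0 n hn i hi (xh I - meshC xh i)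
          have u3 : Q * ∑ j ∈ Finset.Icc 1 I, n j * meshW xh j ≤ Q * CT :=
            mul_le_mul_of_nonneg_left hTn hQ
          linarith
        have t2 : ∑ k ∈ Finset.Icc (i+1) I,
            (Tfun I xh β (fun j => |n j - nhat j|) i (xh (k-1) - meshC xh i)
              - Tfun I xh β (fun j => |n j - nhat j|) i (xh k - meshC xh i))
            ≤ Q * N := by
          rw [teleT I xh β (fun j => |n j - nhat j|) i h2]
          have u1 := hTle (fun j => |n j - nhat j|) (fun j _ => abs_nonneg _) i hi
            (xh i - meshC xh i)
          have u2 := hT0 (fun j => |n j - nhat j|) (fun j _ => abs_nonneg _) i hi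
            (xh I - meshC xh i)
          have u4 : ∑ j ∈ Finset.Icc 1 I, |n j - nhat j| * meshW xh j = N := by
            rw [hNdef]
            exact Finset.sum_congr rfl fun j _ => mul_comm _ _
          rw [← u4]
          have u3 : Q * ∑ j ∈ Finset.Icc 1 I, |n j - nhat j| * meshW xh j
              ≤ Q * ∑ j ∈ Finset.Icc 1 I, |n j - nhat j| * meshW xh j := le_rfl
          linarith [u1, u2]
        exact add_le_add
          (mul_le_mul_of_nonneg_left t1 (mul_nonneg hw.le (abs_nonneg _)))
          (mul_le_mul_of_nonneg_left t2 (mul_nonneg hw.le (hnhat i hi)))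
      refine le_trans (Finset.sum_le_sum inner) ?_
      rw [Finset.sum_add_distrib]
      exact add_le_add (le_of_eq e1) e2
    exact add_le_add (add_le_add (le_of_eq e1) e2) e3
  calc ∑ i ∈ Finset.Icc 1 I, meshW xh i * |Jrhs I xh a β b S n i - Jrhs I xh a β b S nhat i|
      ≤ ∑ i ∈ Finset.Icc 1 I, (|Ag i| / meshC xh i + |Bk i| / meshC xh i) :=
        Finset.sum_le_sum key
    _ = (∑ i ∈ Finset.Icc 1 I, |Ag i| / meshC xh i)
          + ∑ i ∈ Finset.Icc 1 I, |Bk i| / meshC xh i := Finset.sum_add_distrib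
    _ ≤ (N * (Q * CT) + CT * (Q * N) + (N * (Q * CT) + CT * (Q * N)))
          + (Q1 * xmax * N + Q1 * xmax * N) := add_le_add aggTotal brkTotal
    _ ≤ ((4 * C + 6) * Q * CT + 2 * Q1 * xmax) * N := by
        nlinarith [mul_nonneg hQ (mul_nonneg hCT.le hN0), hC]
end

section
/- Let x_max > 0 and let β : [0,x_max]² → ℝ and n : [0,x_max] → ℝ be continuous. Define F(x) = ∫₀^{x} ∫_{x−u}^{x_max} u β(u,v) n(u) n(v) dv du for x ∈ [0, x_max]. Then F is differentiable on ]0, x_max[ with F'(x) = x n(x) ∫₀^{x_max} β(x,v) n(v) dv − ∫₀^{x} u β(u, x−u) n(u) n(x−u) du. -/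
open MeasureTheory Set intervalIntegral

open MeasureTheory Set intervalIntegral

lemma swap_triangle' {h : ℝ → ℝ → ℝ} (hh : Continuous (Function.uncurry h)) {x : ℝ} (hx : 0 ≤ x) :
    (∫ u in (0:ℝ)..x, ∫ t in u..x, h u t) = ∫ t in (0:ℝ)..x, ∫ u in (0:ℝ)..t, h u t := by
  set μ := volume.restrict (Set.Ioc (0:ℝ) x) with hμ
  set f : ℝ → ℝ → ℝ := fun u t => if u < t then h u t else 0 with hf
  have hmeas : MeasurableSet {p : ℝ × ℝ | p.1 < p.2} := measurableSet_lt measurable_fst measurable_snd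
  have hint : Integrable (Function.uncurry f) (μ.prod μ) := by
    rw [hμ, Measure.prod_restrict]
    have h1 : IntegrableOn (Function.uncurry h) (Set.Icc (0:ℝ) x ×ˢ Set.Icc (0:ℝ) x) := by
      exact hh.continuousOn.integrableOn_compact (isCompact_Icc.prod isCompact_Icc)
    have h2 : IntegrableOn (Function.uncurry h) (Set.Ioc (0:ℝ) x ×ˢ Set.Ioc (0:ℝ) x) :=
      h1.mono_set (Set.prod_mono Set.Ioc_subset_Icc_self Set.Ioc_subset_Icc_self)
    have : Function.uncurry f = Set.indicator {p : ℝ × ℝ | p.1 < p.2} (Function.uncurry h) := by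
      funext p
      simp [Function.uncurry, Set.indicator_apply, hf]
    rw [this]
    exact h2.indicator hmeas
  have swap := MeasureTheory.integral_integral_swap hint
  have L : (∫ u in (0:ℝ)..x, ∫ t in u..x, h u t) = ∫ u, ∫ t, f u t ∂μ ∂μ := by
    rw [intervalIntegral.integral_of_le hx, hμ]
    refine setIntegral_congr_fun measurableSet_Ioc fun u hu => ?_
    have : (fun t => f u t) = Set.indicator (Set.Ioi u) (h u) := by
      funext t; simp [Set.indicator_apply, hf]
    rw [this, setIntegral_indicator measurableSet_Ioi, Set.Ioc_inter_Ioi,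
      sup_of_le_right hu.1.le, intervalIntegral.integral_of_le hu.2]
  have R : (∫ t in (0:ℝ)..x, ∫ u in (0:ℝ)..t, h u t) = ∫ t, ∫ u, f u t ∂μ ∂μ := by
    rw [intervalIntegral.integral_of_le hx, hμ]
    refine setIntegral_congr_fun measurableSet_Ioc fun t ht => ?_
    have : (fun u => f u t) = Set.indicator (Set.Iio t) (fun u => h u t) := by
      funext u; simp [Set.indicator_apply, hf]
    rw [this, setIntegral_indicator measurableSet_Iio]
    have hset : Set.Ioc (0:ℝ) x ∩ Set.Iio t = Set.Ioo 0 t := by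
      ext u
      simp only [Set.mem_inter_iff, Set.mem_Ioc, Set.mem_Iio, Set.mem_Ioo]
      exact ⟨fun ⟨⟨h1, _⟩, h3⟩ => ⟨h1, h3⟩, fun ⟨h1, h2⟩ => ⟨⟨h1, le_trans h2.le ht.2⟩, h2⟩⟩
    rw [hset, intervalIntegral.integral_of_le ht.1.le, integral_Ioc_eq_integral_Ioo]
  rw [L, R, swap]


/-- Leibniz rule for the truncated continuous aggregation mass flux
`F(x) = ∫₀^x ∫_{x−u}^{x_max} u β(u,v) n(u) n(v) dv du`:
`F'(x) = x n(x) ∫₀^{x_max} β(x,v) n(v) dv − ∫₀^x u β(u,x−u) n(u) n(x−u) du`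
on `]0, x_max[`. -/
theorem stmt11 (xmax : ℝ) (hxmax : 0 < xmax) (β : ℝ → ℝ → ℝ) (n : ℝ → ℝ)
    (hβ : Continuous (Function.uncurry β)) (hn : Continuous n)
    (F : ℝ → ℝ)
    (hF : ∀ x, F x = ∫ u in (0 : ℝ)..x, ∫ v in (x - u)..xmax, u * β u v * n u * n v) :
    ∀ x ∈ Set.Ioo (0 : ℝ) xmax,
      HasDerivAt F
        (x * n x * (∫ v in (0 : ℝ)..xmax, β x v * n v) -
          ∫ u in (0 : ℝ)..x, u * β u (x - u) * n u * n (x - u)) x := by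
  intro x hx
  set f : ℝ → ℝ → ℝ := fun u v => u * β u v * n u * n v with hfdef
  have hf : Continuous (Function.uncurry f) := by
    have : Function.uncurry f = fun p : ℝ × ℝ => p.1 * β p.1 p.2 * n p.1 * n p.2 := rfl
    rw [this]
    exact (((continuous_fst.mul hβ).mul (hn.comp continuous_fst)).mul (hn.comp continuous_snd))
  have hfu : ∀ u : ℝ, Continuous (f u) := fun u => hf.comp (continuous_const.prodMk continuous_id)
  set a : ℝ → ℝ := fun u => ∫ v in (0:ℝ)..xmax, f u v with hadef
  have ha : Continuous a :=
    continuous_parametric_intervalIntegral_of_continuous' (μ := volume) hf 0 xmax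
  set g : ℝ → ℝ := fun t => ∫ u in (0:ℝ)..t, f u (t - u) with hgdef
  have hg : Continuous g := by
    apply intervalIntegral.continuous_parametric_intervalIntegral_of_continuous (μ := volume)
      (f := fun t u => f u (t - u)) ?_ continuous_id
    exact hf.comp ((continuous_snd).prodMk (continuous_fst.sub continuous_snd))
  -- continuity of u ↦ ∫ v in 0..(y-u), f u v  (for integrability purposes)
  have hb : ∀ y : ℝ, Continuous fun u => ∫ v in (0:ℝ)..(y - u), f u v := by
    intro y
    apply intervalIntegral.continuous_parametric_intervalIntegral_of_continuous (μ := volume)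
      (f := fun u v => f u v) hf (continuous_const.sub continuous_id)
  -- the key identity
  have key : ∀ y : ℝ, 0 ≤ y → F y = (∫ u in (0:ℝ)..y, a u) - ∫ t in (0:ℝ)..y, g t := by
    intro y hy
    have step1 : ∀ u : ℝ, (∫ v in (y - u)..xmax, f u v)
        = a u - ∫ v in (0:ℝ)..(y - u), f u v := by
      intro u
      exact (intervalIntegral.integral_interval_sub_left
        ((hfu u).intervalIntegrable _ _) ((hfu u).intervalIntegrable _ _)).symm
    have step2 : ∀ u : ℝ, (∫ v in (0:ℝ)..(y - u), f u v) = ∫ t in u..y, f u (t - u) := by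
      intro u
      rw [intervalIntegral.integral_comp_sub_right (fun v => f u v) u]
      norm_num
    calc F y = ∫ u in (0:ℝ)..y, (a u - ∫ v in (0:ℝ)..(y - u), f u v) := by
          rw [hF y]; exact intervalIntegral.integral_congr fun u _ => step1 u
      _ = (∫ u in (0:ℝ)..y, a u) - ∫ u in (0:ℝ)..y, ∫ v in (0:ℝ)..(y - u), f u v := by
          rw [intervalIntegral.integral_sub (ha.intervalIntegrable _ _)
            ((hb y).intervalIntegrable _ _)]
      _ = (∫ u in (0:ℝ)..y, a u) - ∫ u in (0:ℝ)..y, ∫ t in u..y, f u (t - u) := by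
          rw [intervalIntegral.integral_congr fun u _ => step2 u]
      _ = (∫ u in (0:ℝ)..y, a u) - ∫ t in (0:ℝ)..y, g t := by
          rw [swap_triangle' (h := fun u t => f u (t - u))
            (hf.comp (continuous_fst.prodMk (continuous_snd.sub continuous_fst))) hy]
  -- F agrees with A - B near x
  have heq : F =ᶠ[nhds x] fun y => (∫ u in (0:ℝ)..y, a u) - ∫ t in (0:ℝ)..y, g t := by
    filter_upwards [Ioo_mem_nhds hx.1 hx.2] with y hy using key y hy.1.le
  have hA : HasDerivAt (fun y => ∫ u in (0:ℝ)..y, a u) (a x) x :=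
    intervalIntegral.integral_hasDerivAt_right (ha.intervalIntegrable _ _)
      (ha.stronglyMeasurableAtFilter _ _) ha.continuousAt
  have hB : HasDerivAt (fun y => ∫ t in (0:ℝ)..y, g t) (g x) x :=
    intervalIntegral.integral_hasDerivAt_right (hg.intervalIntegrable _ _)
      (hg.stronglyMeasurableAtFilter _ _) hg.continuousAt
  have hAB : HasDerivAt F (a x - g x) x := (hA.sub hB).congr_of_eventuallyEq heq
  have ha_x : a x = x * n x * ∫ v in (0:ℝ)..xmax, β x v * n v := by
    rw [hadef]
    simp only
    rw [← intervalIntegral.integral_const_mul]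
    refine intervalIntegral.integral_congr fun v _ => ?_
    simp only [hfdef]; ring
  have hg_x : g x = ∫ u in (0:ℝ)..x, u * β u (x - u) * n u * n (x - u) := rfl
  rw [ha_x, hg_x] at hAB
  exact hAB
end

section
/- Let x_max > 0 and let b : [0,x_max]² → ℝ, S : [0,x_max] → ℝ and n : [0,x_max] → ℝ be twice continuously differentiable, so that g(u,ε) := u b(u,ε) S(ε) n(ε) is C² on [0,x_max]² with all partial derivatives up to order two bounded by a constant M. Then there exists a constant K, depending only on M and x_max, such that for every mesh of ]0, x_max] with maximum width Δx and every 0 ≤ i ≤ I: | ∫_{x_{i+1/2}}^{x_max} ∫₀^{x_{i+1/2}} u b(u,ε) S(ε) n(ε) du dε − Σ_{k=i+1}^{I} n(x_k) S(x_k) Δx_k Σ_{j=1}^{i} x_j b(x_j, x_k) Δx_j | ≤ K Δx², i.e., the midpoint-rule numerical breakage flux approximates the exact breakage flux to second order. -/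
open intervalIntegral


lemma fderiv_lip (g : ℝ × ℝ → ℝ) (hg2 : ContDiff ℝ 2 g) {s : Set (ℝ × ℝ)}
    (hs : Convex ℝ s) {M : ℝ} (hM : ∀ q ∈ s, ‖iteratedFDeriv ℝ 2 g q‖ ≤ M)
    {p q : ℝ × ℝ} (hp : p ∈ s) (hq : q ∈ s) :
    ‖fderiv ℝ g p - fderiv ℝ g q‖ ≤ M * ‖p - q‖ := by
  have hM0 : 0 ≤ M := le_trans (norm_nonneg _) (hM p hp)
  have hdiff : Differentiable ℝ (iteratedFDeriv ℝ 1 g) :=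
    hg2.differentiable_iteratedFDeriv (by norm_num)
  have h1 : ‖iteratedFDeriv ℝ 1 g p - iteratedFDeriv ℝ 1 g q‖ ≤ M * ‖p - q‖ := by
    refine hs.norm_image_sub_le_of_norm_fderiv_le (fun x _ => hdiff x) ?_ hq hp
    intro x hx
    rw [norm_fderiv_iteratedFDeriv]
    exact hM x hx
  refine ContinuousLinearMap.opNorm_le_bound _ (mul_nonneg hM0 (norm_nonneg _)) fun v => ?_
  have hv : (fderiv ℝ g p - fderiv ℝ g q) v
      = (iteratedFDeriv ℝ 1 g p - iteratedFDeriv ℝ 1 g q) ![v] := by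
    simp [iteratedFDeriv_one_apply]
  rw [hv]
  calc ‖(iteratedFDeriv ℝ 1 g p - iteratedFDeriv ℝ 1 g q) ![v]‖
      ≤ ‖iteratedFDeriv ℝ 1 g p - iteratedFDeriv ℝ 1 g q‖ * ∏ i : Fin 1, ‖(![v]) i‖ :=
        ContinuousMultilinearMap.le_opNorm _ _
    _ = ‖iteratedFDeriv ℝ 1 g p - iteratedFDeriv ℝ 1 g q‖ * ‖v‖ := by simp
    _ ≤ M * ‖p - q‖ * ‖v‖ := by
        exact mul_le_mul_of_nonneg_right h1 (norm_nonneg v)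

lemma cell_est (g : ℝ × ℝ → ℝ) (hg2 : ContDiff ℝ 2 g) (M Δ a b c d : ℝ)
    (hab : a ≤ b) (hcd : c ≤ d) (hbΔ : b - a ≤ Δ) (hdΔ : d - c ≤ Δ)
    (hM : ∀ p ∈ Set.Icc ((a, c) : ℝ × ℝ) (b, d), ‖iteratedFDeriv ℝ 2 g p‖ ≤ M) :
    |(∫ ε in c..d, ∫ u in a..b, g (u, ε)) -
        g ((a + b) / 2, (c + d) / 2) * ((b - a) * (d - c))| ≤
      M * Δ ^ 2 * ((b - a) * (d - c)) := by
  set c₀ : ℝ × ℝ := ((a + b) / 2, (c + d) / 2) with hc₀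
  set L : ℝ × ℝ →L[ℝ] ℝ := fderiv ℝ g c₀ with hL
  have hc₀s : c₀ ∈ Set.Icc ((a, c) : ℝ × ℝ) (b, d) := by
    constructor <;> constructor <;> · dsimp [c₀]; linarith
  have hM0 : 0 ≤ M := le_trans (norm_nonneg _) (hM c₀ hc₀s)
  have hΔ0 : 0 ≤ Δ := le_trans (by linarith) hbΔ
  have hgc : Continuous g := hg2.continuous
  set E : ℝ × ℝ → ℝ := fun p => g p - g c₀ - L (p - c₀) with hE
  have hEc : Continuous E := by
    apply (hgc.sub continuous_const).sub
    exact L.continuous.comp (continuous_id.sub continuous_const)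
  -- pointwise bound on E
  have hEbd : ∀ p ∈ Set.Icc ((a, c) : ℝ × ℝ) (b, d), |E p| ≤ M * Δ ^ 2 := by
    intro p hp
    set ψ : ℝ × ℝ → ℝ := fun x => g x - L x with hψ
    have hEψ : E p = ψ p - ψ c₀ := by simp [hE, hψ, map_sub]; ring
    have hψdiff : ∀ x : ℝ × ℝ, DifferentiableAt ℝ ψ x := fun x =>
      (hg2.differentiable (by norm_num) x).sub (L.differentiable x)
    have hψnorm : ‖ψ p - ψ c₀‖ ≤ (M * Δ) * ‖p - c₀‖ := by
      refine (convex_Icc _ _).norm_image_sub_le_of_norm_fderiv_le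
        (fun x _ => hψdiff x) ?_ hc₀s hp
      intro x hx
      have hfd : fderiv ℝ ψ x = fderiv ℝ g x - L := by
        rw [hψ]
        rw [fderiv_fun_sub (hg2.differentiable (by norm_num) x) (L.differentiable x), L.fderiv]
      rw [hfd]
      have hlip := fderiv_lip g hg2 (convex_Icc _ _) hM hx hc₀s
      refine le_trans hlip (mul_le_mul_of_nonneg_left ?_ hM0)
      -- ‖x - c₀‖ ≤ Δ
      rw [Prod.norm_def]
      rcases hp with ⟨⟨_, _⟩, ⟨_, _⟩⟩
      rcases hx with ⟨⟨hx1, hx2⟩, ⟨hx3, hx4⟩⟩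
      apply max_le
      · simp only [Prod.fst_sub]
        rw [Real.norm_eq_abs, abs_le]
        constructor <;> · dsimp [c₀]; dsimp [c₀] at hx1 hx3 ⊢; linarith
      · simp only [Prod.snd_sub]
        rw [Real.norm_eq_abs, abs_le]
        constructor <;> · dsimp [c₀]; dsimp [c₀] at hx2 hx4 ⊢; linarith
    have hpc : ‖p - c₀‖ ≤ Δ := by
      rw [Prod.norm_def]
      rcases hp with ⟨⟨hp1, hp2⟩, ⟨hp3, hp4⟩⟩
      apply max_le
      · rw [Prod.fst_sub, Real.norm_eq_abs, abs_le]
        constructor <;> · dsimp [c₀] at *; linarith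
      · rw [Prod.snd_sub, Real.norm_eq_abs, abs_le]
        constructor <;> · dsimp [c₀] at *; linarith
    rw [hEψ, ← Real.norm_eq_abs]
    calc ‖ψ p - ψ c₀‖ ≤ (M * Δ) * ‖p - c₀‖ := hψnorm
      _ ≤ (M * Δ) * Δ := mul_le_mul_of_nonneg_left hpc (mul_nonneg hM0 hΔ0)
      _ = M * Δ ^ 2 := by ring
  -- inner integral decomposition
  have hint_g : ∀ ε : ℝ, IntervalIntegrable (fun u => g (u, ε)) MeasureTheory.volume a b :=
    fun ε => (hgc.comp (continuous_id.prodMk continuous_const)).intervalIntegrable a b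
  have hint_L : ∀ ε : ℝ, IntervalIntegrable (fun u => L ((u, ε) - c₀)) MeasureTheory.volume a b :=
    fun ε => (L.continuous.comp
      (((continuous_id.prodMk continuous_const).sub continuous_const))).intervalIntegrable a b
  have hint_E : ∀ ε : ℝ, IntervalIntegrable (fun u => E (u, ε)) MeasureTheory.volume a b :=
    fun ε => (hEc.comp (continuous_id.prodMk continuous_const)).intervalIntegrable a b
  have hLcomp : ∀ u ε : ℝ, L ((u, ε) - c₀)
      = (u - (a + b) / 2) * L (1, 0) + (ε - (c + d) / 2) * L (0, 1) := by
    intro u ε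
    have : ((u, ε) - c₀ : ℝ × ℝ)
        = (u - (a + b) / 2) • ((1 : ℝ), (0 : ℝ)) + (ε - (c + d) / 2) • ((0 : ℝ), (1 : ℝ)) := by
      ext <;> simp [c₀]
    rw [this, map_add, map_smul, map_smul, smul_eq_mul, smul_eq_mul]
  have hmid1 : (∫ u in a..b, (u - (a + b) / 2)) = 0 := by
    rw [intervalIntegral.integral_sub intervalIntegrable_id intervalIntegrable_const,
      integral_id, integral_const]
    simp only [smul_eq_mul]
    ring
  have hmid2 : (∫ ε in c..d, (ε - (c + d) / 2)) = 0 := by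
    rw [intervalIntegral.integral_sub intervalIntegrable_id intervalIntegrable_const,
      integral_id, integral_const]
    simp only [smul_eq_mul]
    ring
  have hLint : ∀ ε : ℝ, (∫ u in a..b, L ((u, ε) - c₀))
      = (b - a) * ((ε - (c + d) / 2) * L (0, 1)) := by
    intro ε
    simp only [hLcomp]
    have hi1 : IntervalIntegrable (fun u : ℝ => (u - (a + b) / 2) * L (1, 0))
        MeasureTheory.volume a b := Continuous.intervalIntegrable (by fun_prop) _ _
    rw [intervalIntegral.integral_add hi1 (intervalIntegrable_const),
      intervalIntegral.integral_mul_const, hmid1, integral_const, smul_eq_mul]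
    ring
  have hinner : ∀ ε : ℝ, (∫ u in a..b, g (u, ε))
      = (b - a) * g c₀ + (b - a) * ((ε - (c + d) / 2) * L (0, 1))
        + ∫ u in a..b, E (u, ε) := by
    intro ε
    have hsplit : (fun u : ℝ => g (u, ε))
        = fun u => g c₀ + (L ((u, ε) - c₀) + E (u, ε)) := by
      funext u; simp only [hE]; ring
    calc (∫ u in a..b, g (u, ε))
        = ∫ u in a..b, (g c₀ + (L ((u, ε) - c₀) + E (u, ε))) := by rw [← hsplit]
      _ = (∫ u in a..b, g c₀) + ((∫ u in a..b, L ((u, ε) - c₀)) + ∫ u in a..b, E (u, ε)) := by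
          rw [intervalIntegral.integral_add (intervalIntegrable_const)
            ((hint_L ε).add (hint_E ε)),
            intervalIntegral.integral_add (hint_L ε) (hint_E ε)]
      _ = (b - a) * g c₀ + (b - a) * ((ε - (c + d) / 2) * L (0, 1))
          + ∫ u in a..b, E (u, ε) := by
          rw [integral_const, hLint ε]; simp [smul_eq_mul]; ring
  -- continuity of parametric integrals
  have hJc : Continuous fun ε => ∫ u in a..b, E (u, ε) := by
    apply intervalIntegral.continuous_parametric_intervalIntegral_of_continuous'
    exact hEc.comp (continuous_snd.prodMk continuous_fst)
  have hFc : Continuous fun ε => ∫ u in a..b, g (u, ε) := by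
    apply intervalIntegral.continuous_parametric_intervalIntegral_of_continuous'
    exact hgc.comp (continuous_snd.prodMk continuous_fst)
  -- outer integral
  have houter : (∫ ε in c..d, ∫ u in a..b, g (u, ε))
      = g c₀ * ((b - a) * (d - c)) + ∫ ε in c..d, ∫ u in a..b, E (u, ε) := by
    have h1 : (fun ε : ℝ => ∫ u in a..b, g (u, ε))
        = fun ε => (b - a) * g c₀ + (b - a) * ((ε - (c + d) / 2) * L (0, 1))
          + ∫ u in a..b, E (u, ε) := by
      funext ε; exact hinner ε
    rw [h1]
    have hi2 : IntervalIntegrable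
        (fun ε : ℝ => (b - a) * g c₀ + (b - a) * ((ε - (c + d) / 2) * L (0, 1)))
        MeasureTheory.volume c d := Continuous.intervalIntegrable (by fun_prop) _ _
    have hi3 : IntervalIntegrable
        (fun ε : ℝ => (b - a) * ((ε - (c + d) / 2) * L (0, 1)))
        MeasureTheory.volume c d := Continuous.intervalIntegrable (by fun_prop) _ _
    have hstep : (fun ε : ℝ => (b - a) * g c₀ + (b - a) * ((ε - (c + d) / 2) * L (0, 1))
          + ∫ u in a..b, E (u, ε))
        = fun ε : ℝ => ((b - a) * g c₀ + (b - a) * ((ε - (c + d) / 2) * L (0, 1)))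
          + ∫ u in a..b, E (u, ε) := rfl
    rw [hstep, intervalIntegral.integral_add hi2 (hJc.intervalIntegrable c d),
      intervalIntegral.integral_add (intervalIntegrable_const) hi3,
      integral_const, intervalIntegral.integral_const_mul,
      intervalIntegral.integral_mul_const, hmid2, smul_eq_mul]
    ring
  rw [houter]
  have hbnd : |∫ ε in c..d, ∫ u in a..b, E (u, ε)| ≤ M * Δ ^ 2 * ((b - a) * (d - c)) := by
    have inner_bd : ∀ ε ∈ Set.uIoc c d, ‖∫ u in a..b, E (u, ε)‖ ≤ M * Δ ^ 2 * (b - a) := by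
      intro ε hε
      rw [Set.uIoc_of_le hcd] at hε
      have : ∀ u ∈ Set.uIoc a b, ‖E (u, ε)‖ ≤ M * Δ ^ 2 := by
        intro u hu
        rw [Set.uIoc_of_le hab] at hu
        rw [Real.norm_eq_abs]
        exact hEbd (u, ε) ⟨⟨le_of_lt hu.1, le_of_lt hε.1⟩, ⟨hu.2, hε.2⟩⟩
      have h := intervalIntegral.norm_integral_le_of_norm_le_const this
      rwa [abs_of_nonneg (by linarith : (0:ℝ) ≤ b - a)] at h
    have h := intervalIntegral.norm_integral_le_of_norm_le_const inner_bd
    rw [abs_of_nonneg (by linarith : (0:ℝ) ≤ d - c)] at h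
    rw [← Real.norm_eq_abs]
    calc ‖∫ ε in c..d, ∫ u in a..b, E (u, ε)‖ ≤ M * Δ ^ 2 * (b - a) * (d - c) := h
      _ = M * Δ ^ 2 * ((b - a) * (d - c)) := by ring
  rw [add_sub_cancel_left]
  exact hbnd


/-- Second order accuracy of the midpoint-rule numerical breakage flux (equation (2) of the
paper): if `g(u,ε) = u b(u,ε) S(ε) n(ε)` is C² with all derivatives up to order two bounded
by `M` on `[0,x_max]²`, then there is `K` (depending only on `M` and `x_max`) such that on
every mesh with maximum width `Δx` the numerical breakage flux approximates the exact
breakage flux up to `K Δx²`. -/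
theorem stmt14 (xmax M : ℝ) (hxmax : 0 < xmax)
    (b : ℝ → ℝ → ℝ) (S n : ℝ → ℝ)
    (hbC2 : ContDiff ℝ 2 (Function.uncurry b)) (hSC2 : ContDiff ℝ 2 S)
    (hnC2 : ContDiff ℝ 2 n)
    (g : ℝ × ℝ → ℝ) (hg : g = fun p => p.1 * b p.1 p.2 * S p.2 * n p.2)
    (hgbd : ∀ j : ℕ, j ≤ 2 →
      ∀ p ∈ Set.Icc (0 : ℝ) xmax ×ˢ Set.Icc (0 : ℝ) xmax,
        ‖iteratedFDeriv ℝ j g p‖ ≤ M) :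
    ∃ K : ℝ, 0 ≤ K ∧
      ∀ (I : ℕ) (xh : ℕ → ℝ), 1 ≤ I → xh 0 = 0 → xh I = xmax →
        (∀ m, m < I → xh m < xh (m + 1)) →
        ∀ Δx : ℝ, (∀ i ∈ Finset.Icc 1 I, meshW xh i ≤ Δx) →
        ∀ i ≤ I,
          |(∫ ε in (xh i)..xmax, ∫ u in (0 : ℝ)..(xh i), u * b u ε * S ε * n ε) -
              ∑ k ∈ Finset.Icc (i + 1) I, n (meshC xh k) * S (meshC xh k) * meshW xh k *
                ∑ j ∈ Finset.Icc 1 i,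
                  meshC xh j * b (meshC xh j) (meshC xh k) * meshW xh j| ≤
            K * Δx ^ 2 := by
  have hM0 : 0 ≤ M := by
    refine le_trans (norm_nonneg _) (hgbd 0 (by norm_num) ((0 : ℝ), (0 : ℝ)) ?_)
    exact Set.mem_prod.2 ⟨Set.mem_Icc.2 ⟨le_rfl, hxmax.le⟩, Set.mem_Icc.2 ⟨le_rfl, hxmax.le⟩⟩
  have hgC2 : ContDiff ℝ 2 g := by
    rw [hg]
    exact ((contDiff_fst.mul (hbC2.comp (contDiff_fst.prodMk contDiff_snd))).mul
      (hSC2.comp contDiff_snd)).mul (hnC2.comp contDiff_snd)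
  have hgc : Continuous g := hgC2.continuous
  refine ⟨M * (xmax * xmax), mul_nonneg hM0 (by positivity), ?_⟩
  intro I xh hI1 hx0 hxI hmono Δx hΔx i hiI
  -- monotonicity facts
  have hmono' : ∀ m m' : ℕ, m ≤ m' → m' ≤ I → xh m ≤ xh m' := by
    intro m m' hmm' hm'I
    obtain ⟨k, rfl⟩ := Nat.exists_eq_add_of_le hmm'
    clear hmm'
    induction k with
    | zero => simp
    | succ p ih =>
        refine le_trans (ih (by omega)) ?_
        have := hmono (m + p) (by omega)
        have e : m + p + 1 = m + (p + 1) := by omega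
        rw [e] at this
        exact this.le
  have hx_nonneg : ∀ m, m ≤ I → 0 ≤ xh m := fun m hm => by
    rw [← hx0]; exact hmono' 0 m (Nat.zero_le m) hm
  have hx_le : ∀ m, m ≤ I → xh m ≤ xmax := fun m hm => by
    rw [← hxI]; exact hmono' m I hm le_rfl
  have hcellle : ∀ j : ℕ, 1 ≤ j → j ≤ I → xh (j - 1) ≤ xh j := by
    intro j h1 hj
    have := hmono (j - 1) (by omega)
    have e : j - 1 + 1 = j := by omega
    rw [e] at this
    exact this.le
  have hΔ0 : 0 ≤ Δx := by
    refine le_trans ?_ (hΔx 1 (Finset.mem_Icc.2 ⟨le_rfl, hI1⟩))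
    have := hcellle 1 le_rfl hI1
    simp only [meshW]
    linarith
  -- rewrite integrand as g
  have hrw : ∀ u ε : ℝ, u * b u ε * S ε * n ε = g (u, ε) := fun u ε => by rw [hg]
  simp only [hrw]
  -- innermost splitting
  have hA : ∀ ε : ℝ, (∫ u in (0:ℝ)..(xh i), g (u, ε))
      = ∑ j ∈ Finset.Icc 1 i, ∫ u in (xh (j-1))..(xh j), g (u, ε) := by
    intro ε
    have hady := intervalIntegral.sum_integral_adjacent_intervals
      (μ := MeasureTheory.volume) (a := xh) (n := i) (f := fun u => g (u, ε))
      (fun k _ => Continuous.intervalIntegrable (by fun_prop) _ _)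
    rw [← Finset.Ico_add_one_right_eq_Icc, Finset.sum_Ico_eq_sum_range,
      show (0:ℝ) = xh 0 from hx0.symm, ← hady]
    refine Finset.sum_congr (by congr 1 <;> omega) ?_
    intro m _
    have e1 : 1 + m - 1 = m := by omega
    have e2 : 1 + m = m + 1 := by omega
    rw [e1, e2]
  -- continuity of parametric integrals
  have hFcont : ∀ a' b' : ℝ, Continuous fun ε => ∫ u in a'..b', g (u, ε) := by
    intro a' b'
    apply intervalIntegral.continuous_parametric_intervalIntegral_of_continuous'
    exact hgc.comp (continuous_snd.prodMk continuous_fst)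
  -- outer splitting
  have hB : (∫ ε in (xh i)..xmax, ∫ u in (0:ℝ)..(xh i), g (u, ε))
      = ∑ k ∈ Finset.Icc (i+1) I, ∫ ε in (xh (k-1))..(xh k),
          ∫ u in (0:ℝ)..(xh i), g (u, ε) := by
    have hady := intervalIntegral.sum_integral_adjacent_intervals
      (μ := MeasureTheory.volume) (a := fun m => xh (i + m)) (n := I - i)
      (f := fun ε => ∫ u in (0:ℝ)..(xh i), g (u, ε))
      (fun k _ => (hFcont 0 (xh i)).intervalIntegrable _ _)
    have eI : i + (I - i) = I := by omega
    simp only [Nat.add_zero, eI, hxI] at hady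
    rw [← hady, ← Finset.Ico_add_one_right_eq_Icc, Finset.sum_Ico_eq_sum_range]
    refine Finset.sum_congr (by congr 1 <;> omega) ?_
    intro m _
    have e1 : i + 1 + m - 1 = i + m := by omega
    have e2 : i + 1 + m = i + (m + 1) := by omega
    rw [e1, e2]
  -- full cell decomposition
  have key : (∫ ε in (xh i)..xmax, ∫ u in (0:ℝ)..(xh i), g (u, ε))
      = ∑ k ∈ Finset.Icc (i+1) I, ∑ j ∈ Finset.Icc 1 i,
          ∫ ε in (xh (k-1))..(xh k), ∫ u in (xh (j-1))..(xh j), g (u, ε) := by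
    rw [hB]
    refine Finset.sum_congr rfl fun k _ => ?_
    simp only [hA]
    exact intervalIntegral.integral_finset_sum
      (fun j _ => ((hFcont (xh (j-1)) (xh j)).intervalIntegrable _ _))
  rw [key]
  -- rewrite numerical sum
  have hsum : ∀ k : ℕ, n (meshC xh k) * S (meshC xh k) * meshW xh k *
        ∑ j ∈ Finset.Icc 1 i, meshC xh j * b (meshC xh j) (meshC xh k) * meshW xh j
      = ∑ j ∈ Finset.Icc 1 i, g (meshC xh j, meshC xh k) * (meshW xh j * meshW xh k) := by
    intro k
    rw [Finset.mul_sum]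
    refine Finset.sum_congr rfl fun j _ => ?_
    simp only [hg]
    ring
  rw [show (∑ k ∈ Finset.Icc (i+1) I, n (meshC xh k) * S (meshC xh k) * meshW xh k *
        ∑ j ∈ Finset.Icc 1 i, meshC xh j * b (meshC xh j) (meshC xh k) * meshW xh j)
      = ∑ k ∈ Finset.Icc (i+1) I, ∑ j ∈ Finset.Icc 1 i,
          g (meshC xh j, meshC xh k) * (meshW xh j * meshW xh k)
    from Finset.sum_congr rfl fun k _ => hsum k]
  rw [← Finset.sum_sub_distrib]
  -- telescoping sums of widths
  have tele : ∀ m₀ m₁ : ℕ, m₀ ≤ m₁ →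
      ∑ k ∈ Finset.Icc (m₀+1) m₁, meshW xh k = xh m₁ - xh m₀ := by
    intro m₀ m₁ h
    rw [← Finset.Ico_add_one_right_eq_Icc, Finset.sum_Ico_eq_sum_range]
    have e : m₁ + 1 - (m₀ + 1) = m₁ - m₀ := by omega
    rw [e]
    have hterm : ∀ m : ℕ, meshW xh (m₀ + 1 + m) = xh (m₀ + (m + 1)) - xh (m₀ + m) := by
      intro m
      simp only [meshW]
      congr 2 <;> omega
    simp only [hterm]
    rw [Finset.sum_range_sub (f := fun m => xh (m₀ + m))]
    have e2 : m₀ + (m₁ - m₀) = m₁ := by omega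
    rw [e2, Nat.add_zero]
  -- per cell estimate and summation
  calc |∑ k ∈ Finset.Icc (i+1) I, ((∑ j ∈ Finset.Icc 1 i,
          ∫ ε in (xh (k-1))..(xh k), ∫ u in (xh (j-1))..(xh j), g (u, ε)) -
        ∑ j ∈ Finset.Icc 1 i, g (meshC xh j, meshC xh k) * (meshW xh j * meshW xh k))|
      ≤ ∑ k ∈ Finset.Icc (i+1) I, |(∑ j ∈ Finset.Icc 1 i,
          ∫ ε in (xh (k-1))..(xh k), ∫ u in (xh (j-1))..(xh j), g (u, ε)) -
        ∑ j ∈ Finset.Icc 1 i, g (meshC xh j, meshC xh k) * (meshW xh j * meshW xh k)| :=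
        Finset.abs_sum_le_sum_abs _ _
    _ ≤ ∑ k ∈ Finset.Icc (i+1) I, ∑ j ∈ Finset.Icc 1 i,
          M * Δx ^ 2 * (meshW xh j * meshW xh k) := by
        refine Finset.sum_le_sum fun k hk => ?_
        rw [← Finset.sum_sub_distrib]
        refine le_trans (Finset.abs_sum_le_sum_abs _ _) (Finset.sum_le_sum fun j hj => ?_)
        obtain ⟨hj1, hj2⟩ := Finset.mem_Icc.1 hj
        obtain ⟨hk1, hk2⟩ := Finset.mem_Icc.1 hk
        have hjI : j ≤ I := le_trans hj2 hiI
        have hk1' : 1 ≤ k := by omega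
        simp only [meshW, meshC]
        refine cell_est g hgC2 M Δx (xh (j-1)) (xh j) (xh (k-1)) (xh k)
          (hcellle j hj1 hjI) (hcellle k hk1' hk2) ?_ ?_ ?_
        · have := hΔx j (Finset.mem_Icc.2 ⟨hj1, hjI⟩)
          simpa [meshW] using this
        · have := hΔx k (Finset.mem_Icc.2 ⟨hk1', hk2⟩)
          simpa [meshW] using this
        · intro p hp
          obtain ⟨⟨hpa, hpc⟩, ⟨hpb, hpd⟩⟩ := hp
          refine hgbd 2 le_rfl p (Set.mem_prod.2 ⟨Set.mem_Icc.2 ⟨?_, ?_⟩,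
            Set.mem_Icc.2 ⟨?_, ?_⟩⟩)
          · exact le_trans (hx_nonneg (j-1) (by omega)) hpa
          · exact le_trans hpb (hx_le j hjI)
          · exact le_trans (hx_nonneg (k-1) (by omega)) hpc
          · exact le_trans hpd (hx_le k hk2)
    _ = M * Δx ^ 2 * ((xh i - xh 0) * (xh I - xh i)) := by
        have inner : ∀ k : ℕ, ∑ j ∈ Finset.Icc 1 i, M * Δx ^ 2 * (meshW xh j * meshW xh k)
            = (M * Δx ^ 2 * meshW xh k) * ∑ j ∈ Finset.Icc 1 i, meshW xh j := by
          intro k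
          calc ∑ j ∈ Finset.Icc 1 i, M * Δx ^ 2 * (meshW xh j * meshW xh k)
              = ∑ j ∈ Finset.Icc 1 i, (M * Δx ^ 2 * meshW xh k) * meshW xh j :=
                Finset.sum_congr rfl fun j _ => by ring
            _ = (M * Δx ^ 2 * meshW xh k) * ∑ j ∈ Finset.Icc 1 i, meshW xh j :=
                (Finset.mul_sum _ _ _).symm
        calc ∑ k ∈ Finset.Icc (i+1) I, ∑ j ∈ Finset.Icc 1 i,
              M * Δx ^ 2 * (meshW xh j * meshW xh k)
            = ∑ k ∈ Finset.Icc (i+1) I,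
                (M * Δx ^ 2 * (∑ j ∈ Finset.Icc 1 i, meshW xh j)) * meshW xh k := by
              refine Finset.sum_congr rfl fun k _ => ?_
              rw [inner k]; ring
          _ = (M * Δx ^ 2 * (∑ j ∈ Finset.Icc 1 i, meshW xh j)) *
                ∑ k ∈ Finset.Icc (i+1) I, meshW xh k := (Finset.mul_sum _ _ _).symm
          _ = M * Δx ^ 2 * ((xh i - xh 0) * (xh I - xh i)) := by
              rw [tele 0 i (Nat.zero_le i), tele i I hiI]
              ring
    _ ≤ M * (xmax * xmax) * Δx ^ 2 := by
        rw [hx0, hxI]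
        have h1 : (xh i - 0) * (xmax - xh i) ≤ xmax * xmax := by
          nlinarith [hx_nonneg i hiI, hx_le i hiI]
        calc M * Δx ^ 2 * ((xh i - 0) * (xmax - xh i))
            ≤ M * Δx ^ 2 * (xmax * xmax) :=
              mul_le_mul_of_nonneg_left h1 (mul_nonneg hM0 (sq_nonneg _))
          _ = M * (xmax * xmax) * Δx ^ 2 := by ring
end
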